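/- arXiv:2209.08760 — 6 statements merged into one kernel-verified Lean document; each statement's English description precedes it below -/
import Mathlib

section
/- For fixed 0 < δ < 1, if f ∈ L¹ of the unit disc Ω has support contained in {z : |z| ≤ √(1-δ²)}, then the X-ray type transform X_k f(e^{iβ}, e^{iθ}) = ∫_{-∞}^{∞} f(e^{iβ} + t e^{iθ}) e^{-i2kθ} dt (with f extended by zero outside Ω) is integrable on the torus, with ‖X_k f‖_{L¹(Γ×S¹)} ≤ (1/(πδ)) ‖f‖_{L¹(Ω)}. -/
open MeasureTheory Real Set ENNReal

noncomputable section XrayAux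

/-- The map `(β, t) ↦ e^{iβ} + t e^{iθ}` in real coordinates. -/
def xPhi (θ : ℝ) (p : ℝ × ℝ) : ℝ × ℝ :=
  (Real.cos p.1 + p.2 * Real.cos θ, Real.sin p.1 + p.2 * Real.sin θ)

def xDeriv (θ : ℝ) (p : ℝ × ℝ) : ℝ × ℝ →L[ℝ] ℝ × ℝ :=
  LinearMap.toContinuousLinearMap (Matrix.toLin (Module.Basis.finTwoProd ℝ) (Module.Basis.finTwoProd ℝ)
    !![-Real.sin p.1, Real.cos θ; Real.cos p.1, Real.sin θ])

lemma xPhi_continuous (θ : ℝ) : Continuous (xPhi θ) := by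
  unfold xPhi
  fun_prop

lemma xPhi_hasFDerivAt (θ : ℝ) (p : ℝ × ℝ) : HasFDerivAt (xPhi θ) (xDeriv θ p) p := by
  unfold xPhi xDeriv
  rw [Matrix.toLin_finTwoProd_toContinuousLinearMap]
  convert HasFDerivAt.prodMk (𝕜 := ℝ)
    (((Real.hasDerivAt_cos p.1).comp_hasFDerivAt p hasFDerivAt_fst).add
      (hasFDerivAt_snd.mul_const (Real.cos θ)))
    (((Real.hasDerivAt_sin p.1).comp_hasFDerivAt p hasFDerivAt_fst).add
      (hasFDerivAt_snd.mul_const (Real.sin θ))) using 2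
  all_goals rfl

lemma xDeriv_det (θ : ℝ) (p : ℝ × ℝ) : (xDeriv θ p).det = -Real.cos (p.1 - θ) := by
  simp only [xDeriv, LinearMap.det_toContinuousLinearMap, LinearMap.det_toLin,
    Matrix.det_fin_two_of, Real.cos_sub]
  ring

lemma xPhi_injOn (θ : ℝ) (s : Set (ℝ × ℝ)) (hsub : ∀ p ∈ s, p.1 ∈ Set.Ioc (-π) π)
    (hsgn : (∀ p ∈ s, 0 < Real.cos (p.1 - θ)) ∨ (∀ p ∈ s, Real.cos (p.1 - θ) < 0)) :
    Set.InjOn (xPhi θ) s := by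
  intro p hp q hq he
  have e1 : Real.cos p.1 + p.2 * Real.cos θ = Real.cos q.1 + q.2 * Real.cos θ :=
    congrArg Prod.fst he
  have e2 : Real.sin p.1 + p.2 * Real.sin θ = Real.sin q.1 + q.2 * Real.sin θ :=
    congrArg Prod.snd he
  have hs1 : Real.sin (p.1 - θ) = Real.sin (q.1 - θ) := by
    rw [Real.sin_sub, Real.sin_sub]
    linear_combination Real.cos θ * e2 - Real.sin θ * e1
  have hs2 : Real.cos (p.1 - θ) + p.2 = Real.cos (q.1 - θ) + q.2 := by
    rw [Real.cos_sub, Real.cos_sub]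
    linear_combination Real.cos θ * e1 + Real.sin θ * e2 + (q.2 - p.2) * Real.sin_sq_add_cos_sq θ
  have habs : |Real.cos (p.1 - θ)| = |Real.cos (q.1 - θ)| := by
    rw [← Real.sqrt_sq_eq_abs, ← Real.sqrt_sq_eq_abs]
    congr 1
    linear_combination Real.sin_sq_add_cos_sq (p.1 - θ) - Real.sin_sq_add_cos_sq (q.1 - θ) - (Real.sin (p.1 - θ) + Real.sin (q.1 - θ)) * hs1
  have hcos : Real.cos (p.1 - θ) = Real.cos (q.1 - θ) := by
    rcases hsgn with h | h
    · rwa [abs_of_pos (h p hp), abs_of_pos (h q hq)] at habs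
    · rwa [abs_of_neg (h p hp), abs_of_neg (h q hq), neg_inj] at habs
  have ht : p.2 = q.2 := by linarith
  have hone : Real.cos (p.1 - q.1) = 1 := by
    have : p.1 - q.1 = (p.1 - θ) - (q.1 - θ) := by ring
    rw [this, Real.cos_sub, hcos, hs1]
    linear_combination Real.sin_sq_add_cos_sq (q.1 - θ)
  have hb1 := hsub p hp
  have hb2 := hsub q hq
  have hβ : p.1 - q.1 = 0 := by
    rw [← Real.cos_eq_one_iff_of_lt_of_lt (by simp at hb1 hb2 ⊢; linarith)
      (by simp at hb1 hb2 ⊢; linarith)]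
    exact hone
  exact Prod.ext (by linarith) ht

/-- Change of variables estimate on a sign region. -/
lemma xPhi_cv (θ : ℝ) (s : Set (ℝ × ℝ)) (hs : MeasurableSet s)
    (hsub : ∀ p ∈ s, p.1 ∈ Set.Ioc (-π) π)
    (hsgn : (∀ p ∈ s, 0 < Real.cos (p.1 - θ)) ∨ (∀ p ∈ s, Real.cos (p.1 - θ) < 0))
    (G : ℝ × ℝ → ℝ≥0∞) :
    ∫⁻ p in s, ENNReal.ofReal |Real.cos (p.1 - θ)| * G (xPhi θ p) ≤ ∫⁻ q, G q := by
  have key := lintegral_image_eq_lintegral_abs_det_fderiv_mul (μ := volume) hs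
    (fun p _ => (xPhi_hasFDerivAt θ p).hasFDerivWithinAt) (xPhi_injOn θ s hsub hsgn) G
  calc ∫⁻ p in s, ENNReal.ofReal |Real.cos (p.1 - θ)| * G (xPhi θ p)
      = ∫⁻ p in s, ENNReal.ofReal |(xDeriv θ p).det| * G (xPhi θ p) := by
        apply lintegral_congr
        intro p
        rw [xDeriv_det, abs_neg]
    _ = ∫⁻ x in xPhi θ '' s, G x := key.symm
    _ ≤ ∫⁻ q, G q := lintegral_mono' Measure.restrict_le_self le_rfl

lemma cos_zero_null (θ : ℝ) :
    volume {p : ℝ × ℝ | Real.cos (p.1 - θ) = 0} = 0 := by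
  have h1 : {p : ℝ × ℝ | Real.cos (p.1 - θ) = 0}
      = {β : ℝ | Real.cos (β - θ) = 0} ×ˢ (univ : Set ℝ) := by
    ext p; simp [Set.mem_prod]
  have h2 : {β : ℝ | Real.cos (β - θ) = 0} ⊆ Set.range (fun k : ℤ => θ + (2 * k + 1) * π / 2) := by
    intro β hβ
    rw [Set.mem_setOf_eq, Real.cos_eq_zero_iff] at hβ
    obtain ⟨n, hn⟩ := hβ
    exact ⟨n, by push_cast; linarith⟩
  have h3 : volume {β : ℝ | Real.cos (β - θ) = 0} = 0 :=
    measure_mono_null h2 ((Set.countable_range _).measure_zero volume)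
  rw [h1, Measure.volume_eq_prod, Measure.prod_prod, h3, zero_mul]

lemma xPhi_key (δ θ : ℝ) (hδ0 : 0 < δ) (G : ℝ × ℝ → ℝ≥0∞)
    (hG : ∀ p : ℝ × ℝ, G (xPhi θ p) ≠ 0 → δ ≤ |Real.cos (p.1 - θ)|) :
    ∫⁻ p in Set.Ioc (-π) π ×ˢ (univ : Set ℝ), G (xPhi θ p)
      ≤ 2 * ENNReal.ofReal δ⁻¹ * ∫⁻ q, G q := by
  set sq : Set (ℝ × ℝ) := Set.Ioc (-π) π ×ˢ (univ : Set ℝ) with hsq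
  have hmcos : Measurable fun p : ℝ × ℝ => Real.cos (p.1 - θ) :=
    (Real.continuous_cos.comp (continuous_fst.sub continuous_const)).measurable
  have hmsq : MeasurableSet sq := measurableSet_Ioc.prod MeasurableSet.univ
  set s1 := sq ∩ {p : ℝ × ℝ | 0 < Real.cos (p.1 - θ)} with hs1
  set s2 := sq ∩ {p : ℝ × ℝ | Real.cos (p.1 - θ) < 0} with hs2
  set s0 := {p : ℝ × ℝ | Real.cos (p.1 - θ) = 0} with hs0
  have hm1 : MeasurableSet s1 := hmsq.inter (measurableSet_lt measurable_const hmcos)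
  have hm2 : MeasurableSet s2 := hmsq.inter (measurableSet_lt hmcos measurable_const)
  have hsub : sq ⊆ s1 ∪ s2 ∪ s0 := by
    intro p hp
    rcases lt_trichotomy (Real.cos (p.1 - θ)) 0 with h | h | h
    · exact Or.inl (Or.inr ⟨hp, h⟩)
    · exact Or.inr h
    · exact Or.inl (Or.inl ⟨hp, h⟩)
  have hpt : ∀ p : ℝ × ℝ, G (xPhi θ p)
      ≤ ENNReal.ofReal δ⁻¹ * (ENNReal.ofReal |Real.cos (p.1 - θ)| * G (xPhi θ p)) := by
    intro p
    rcases eq_or_ne (G (xPhi θ p)) 0 with h | h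
    · simp [h]
    · have hd := hG p h
      rw [← mul_assoc, ← ENNReal.ofReal_mul (by positivity)]
      nth_rewrite 1 [← one_mul (G (xPhi θ p))]
      gcongr
      rw [← ENNReal.ofReal_one]
      apply ENNReal.ofReal_le_ofReal
      rw [← inv_mul_cancel₀ hδ0.ne']
      exact mul_le_mul_of_nonneg_left hd (by positivity)
  have hbound : ∀ s : Set (ℝ × ℝ), MeasurableSet s → (∀ p ∈ s, p.1 ∈ Set.Ioc (-π) π) →
      ((∀ p ∈ s, 0 < Real.cos (p.1 - θ)) ∨ (∀ p ∈ s, Real.cos (p.1 - θ) < 0)) →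
      ∫⁻ p in s, G (xPhi θ p) ≤ ENNReal.ofReal δ⁻¹ * ∫⁻ q, G q := by
    intro s hs hsubs hsgn
    calc ∫⁻ p in s, G (xPhi θ p)
        ≤ ∫⁻ p in s, ENNReal.ofReal δ⁻¹ *
            (ENNReal.ofReal |Real.cos (p.1 - θ)| * G (xPhi θ p)) :=
          lintegral_mono fun p => hpt p
      _ = ENNReal.ofReal δ⁻¹ *
            ∫⁻ p in s, ENNReal.ofReal |Real.cos (p.1 - θ)| * G (xPhi θ p) :=
          lintegral_const_mul' _ _ ENNReal.ofReal_ne_top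
      _ ≤ ENNReal.ofReal δ⁻¹ * ∫⁻ q, G q :=
          mul_le_mul_right (xPhi_cv θ s hs hsubs hsgn G) _
  calc ∫⁻ p in sq, G (xPhi θ p) ≤ ∫⁻ p in s1 ∪ s2 ∪ s0, G (xPhi θ p) :=
        lintegral_mono_set hsub
    _ ≤ (∫⁻ p in s1 ∪ s2, G (xPhi θ p)) + ∫⁻ p in s0, G (xPhi θ p) := lintegral_union_le _ _ _
    _ ≤ (∫⁻ p in s1, G (xPhi θ p)) + (∫⁻ p in s2, G (xPhi θ p))
          + ∫⁻ p in s0, G (xPhi θ p) := by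
        gcongr
        exact lintegral_union_le _ _ _
    _ ≤ ENNReal.ofReal δ⁻¹ * (∫⁻ q, G q) + ENNReal.ofReal δ⁻¹ * (∫⁻ q, G q) + 0 := by
        gcongr
        · exact hbound s1 hm1 (fun p hp => hp.1.1) (Or.inl fun p hp => hp.2)
        · exact hbound s2 hm2 (fun p hp => hp.1.1) (Or.inr fun p hp => hp.2)
        · rw [setLIntegral_measure_zero _ _ (cos_zero_null θ)]
    _ = 2 * ENNReal.ofReal δ⁻¹ * ∫⁻ q, G q := by ring

lemma xPhi_measurable (θ : ℝ) : Measurable (xPhi θ) := (xPhi_continuous θ).measurable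

lemma xPhi_preimage_null (θ : ℝ) (N : Set (ℝ × ℝ)) (hNm : MeasurableSet N)
    (hN : volume N = 0) :
    volume {p : ℝ × ℝ | p.1 ∈ Set.Ioc (-π) π ∧ xPhi θ p ∈ N} = 0 := by
  set G : ℝ × ℝ → ℝ≥0∞ := N.indicator 1 with hG
  set A : Set (ℝ × ℝ) := {p : ℝ × ℝ | p.1 ∈ Set.Ioc (-π) π ∧ xPhi θ p ∈ N} with hA
  have hmA : MeasurableSet A := by
    apply MeasurableSet.inter
    · exact measurable_fst measurableSet_Ioc
    · exact xPhi_measurable θ hNm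
  have hmcos : Measurable fun p : ℝ × ℝ => Real.cos (p.1 - θ) :=
    (Real.continuous_cos.comp (continuous_fst.sub continuous_const)).measurable
  set u : ℕ → Set (ℝ × ℝ) := fun n => A ∩ {p : ℝ × ℝ | ((n : ℝ) + 1)⁻¹ < Real.cos (p.1 - θ)}
    with hu
  set v : ℕ → Set (ℝ × ℝ) := fun n => A ∩ {p : ℝ × ℝ | Real.cos (p.1 - θ) < -((n : ℝ) + 1)⁻¹}
    with hv
  have hcover : A ⊆ ({p : ℝ × ℝ | Real.cos (p.1 - θ) = 0}) ∪ (⋃ n, u n) ∪ (⋃ n, v n) := by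
    intro p hp
    rcases lt_trichotomy (Real.cos (p.1 - θ)) 0 with h | h | h
    · obtain ⟨n, hn⟩ := exists_nat_one_div_lt (show (0:ℝ) < -Real.cos (p.1 - θ) by linarith)
      rw [one_div] at hn
      exact Or.inr (Set.mem_iUnion.2 ⟨n, hp, by simp only [Set.mem_setOf_eq]; linarith⟩)
    · exact Or.inl (Or.inl h)
    · obtain ⟨n, hn⟩ := exists_nat_one_div_lt h
      rw [one_div] at hn
      exact Or.inl (Or.inr (Set.mem_iUnion.2 ⟨n, hp, hn⟩))
  have hzero : ∀ (c : ℝ), 0 < c → ∀ s : Set (ℝ × ℝ), MeasurableSet s → s ⊆ A →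
      ((∀ p ∈ s, 0 < Real.cos (p.1 - θ)) ∨ (∀ p ∈ s, Real.cos (p.1 - θ) < 0)) →
      (∀ p ∈ s, c ≤ |Real.cos (p.1 - θ)|) → volume s = 0 := by
    intro c hc s hms hsA hsgn hcs
    have h1 : volume s = ∫⁻ p in s, 1 := (setLIntegral_one s).symm
    have h2 : ∫⁻ p in s, (1 : ℝ≥0∞)
        ≤ ∫⁻ p in s, ENNReal.ofReal c⁻¹ *
            (ENNReal.ofReal |Real.cos (p.1 - θ)| * G (xPhi θ p)) := by
      apply setLIntegral_mono' hms
      intro p hp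
      have hGp : G (xPhi θ p) = 1 := by
        rw [hG, Set.indicator_of_mem (hsA hp).2]; rfl
      rw [hGp, mul_one, ← ENNReal.ofReal_mul (by positivity), ← ENNReal.ofReal_one]
      apply ENNReal.ofReal_le_ofReal
      rw [← inv_mul_cancel₀ hc.ne']
      exact mul_le_mul_of_nonneg_left (hcs p hp) (by positivity)
    have h3 : ∫⁻ p in s, ENNReal.ofReal c⁻¹ *
          (ENNReal.ofReal |Real.cos (p.1 - θ)| * G (xPhi θ p))
        ≤ ENNReal.ofReal c⁻¹ * ∫⁻ q, G q := by
      rw [lintegral_const_mul' _ _ ENNReal.ofReal_ne_top]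
      exact mul_le_mul_right
        (xPhi_cv θ s hms (fun p hp => (hsA hp).1) hsgn G) _
    have h4 : ∫⁻ q, G q = 0 := by
      rw [hG, lintegral_indicator hNm]
      simp [hN]
    rw [h1]
    refine le_antisymm ?_ zero_le
    calc ∫⁻ p in s, (1:ℝ≥0∞) ≤ ENNReal.ofReal c⁻¹ * ∫⁻ q, G q := h2.trans h3
      _ = 0 := by rw [h4, mul_zero]
  have hinvpos : ∀ n : ℕ, (0:ℝ) < ((n : ℝ) + 1)⁻¹ := fun n => by positivity
  apply measure_mono_null hcover
  apply measure_union_null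
  apply measure_union_null
  · exact cos_zero_null θ
  · apply measure_iUnion_null
    intro n
    apply hzero _ (hinvpos n) _ (hmA.inter (measurableSet_lt measurable_const hmcos))
      Set.inter_subset_left
    · exact Or.inl fun p hp => lt_trans (hinvpos n) hp.2
    · exact fun p hp => le_trans hp.2.le (le_abs_self _)
  · apply measure_iUnion_null
    intro n
    apply hzero _ (hinvpos n) _ (hmA.inter (measurableSet_lt hmcos measurable_const))
      Set.inter_subset_left
    · exact Or.inr fun p hp => lt_trans hp.2 (neg_lt_zero.mpr (hinvpos n))
    · intro p hp
      rw [abs_of_neg (lt_trans hp.2 (neg_lt_zero.mpr (hinvpos n)))]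
      have := hp.2
      simp only [Set.mem_setOf_eq] at this
      linarith

lemma xPhi_spec (θ β t : ℝ) :
    Complex.measurableEquivRealProd.symm (xPhi θ (β, t))
      = Complex.exp (Complex.I * β) + t * Complex.exp (Complex.I * θ) := by
  rw [Complex.measurableEquivRealProd_symm_apply]
  apply Complex.ext <;>
    simp [xPhi, Complex.exp_re, Complex.exp_im, Complex.add_re, Complex.add_im,
      Complex.mul_re, Complex.mul_im]

end XrayAux

/-- If `f ∈ L¹` is supported in the disc `{|z| ≤ √(1-δ²)}` (in particular vanishes outside
the unit disc), then the transform `X_k f(e^{iβ}, e^{iθ}) = ∫ f(e^{iβ}+t e^{iθ}) e^{-2ikθ} dt`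
is integrable on the torus, with `‖X_k f‖_{L¹(Γ×S¹)} ≤ (1/(πδ)) ‖f‖_{L¹}`. -/
theorem stmt_5 (δ : ℝ) (hδ0 : 0 < δ) (hδ1 : δ < 1) (k : ℤ) (f : ℂ → ℂ)
    (hf : Integrable f)
    (hsupp : ∀ z : ℂ, Real.sqrt (1 - δ ^ 2) < ‖z‖ → f z = 0) :
    IntegrableOn (fun p : ℝ × ℝ =>
      ∫ t : ℝ, f (Complex.exp (Complex.I * p.1) + t * Complex.exp (Complex.I * p.2)) *
        Complex.exp (-2 * Complex.I * (k : ℂ) * p.2))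
      (Set.Ioc (-π) π ×ˢ Set.Ioc (-π) π) ∧
    (1 / (2 * π) ^ 2) * (∫ β in Set.Ioc (-π) π, ∫ θ in Set.Ioc (-π) π,
        ‖∫ t : ℝ,
          f (Complex.exp (Complex.I * β) + t * Complex.exp (Complex.I * θ)) *
            Complex.exp (-2 * Complex.I * (k : ℂ) * θ)‖)
      ≤ (1 / (π * δ)) * ∫ z : ℂ, ‖f z‖ := by
  have hπ := Real.pi_pos
  have h1δ : (0:ℝ) ≤ 1 - δ ^ 2 := by nlinarith
  set r : ℝ := Real.sqrt (1 - δ ^ 2) with hr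
  have hrsq : r ^ 2 = 1 - δ ^ 2 := Real.sq_sqrt h1δ
  -- measurable representative of f supported in the closed disc of radius r
  set f₀ : ℂ → ℂ := Set.indicator {z : ℂ | ‖z‖ ≤ r} (hf.1.mk f) with hf₀
  have hmball : MeasurableSet {z : ℂ | ‖z‖ ≤ r} :=
    (isClosed_le (continuous_norm) continuous_const).measurableSet
  have hsm₀ : StronglyMeasurable f₀ := hf.1.stronglyMeasurable_mk.indicator hmball
  have hae : f =ᵐ[volume] f₀ := by
    filter_upwards [hf.1.ae_eq_mk] with z hz
    by_cases h : z ∈ {z : ℂ | ‖z‖ ≤ r}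
    · rw [hf₀, Set.indicator_of_mem h, ← hz]
    · rw [hf₀, Set.indicator_of_notMem h, hsupp z (not_le.mp h)]
  have hsupp₀ : ∀ z : ℂ, f₀ z ≠ 0 → ‖z‖ ≤ r := by
    intro z hz
    by_contra h
    exact hz (Set.indicator_of_notMem (fun hh : z ∈ {z : ℂ | ‖z‖ ≤ r} => h hh) _)
  -- the density in ℝ≥0∞, transported to ℝ × ℝ
  set E := Complex.measurableEquivRealProd with hE
  set G : ℝ × ℝ → ℝ≥0∞ := fun q => (‖f₀ (E.symm q)‖₊ : ℝ≥0∞) with hGdef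
  have hGmeas : Measurable G := (hsm₀.measurable.nnnorm.comp E.symm.measurable).coe_nnreal_ennreal
  have hGint : ∫⁻ q, G q = ∫⁻ z, (‖f₀ z‖₊ : ℝ≥0∞) :=
    (Complex.volume_preserving_equiv_real_prod.symm E).lintegral_comp
      (hsm₀.measurable.nnnorm.coe_nnreal_ennreal)
  have hIeq : ∫⁻ z, (‖f₀ z‖₊ : ℝ≥0∞) = ENNReal.ofReal (∫ z, ‖f z‖) := by
    have hnn : (fun z => ‖f₀ z‖) =ᵐ[volume] fun z => ‖f z‖ :=
      hae.mono fun z hz => by simp only []; rw [hz]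
    have := ofReal_integral_norm_eq_lintegral_enorm (hf.congr hae)
    rw [integral_congr_ae hnn] at this
    exact this.symm
  -- support condition transported
  have hGsupp : ∀ (θ : ℝ) (p : ℝ × ℝ), G (xPhi θ p) ≠ 0 → δ ≤ |Real.cos (p.1 - θ)| := by
    intro θ p hp
    have hz : f₀ (E.symm (xPhi θ p)) ≠ 0 := by
      intro h0
      apply hp
      rw [hGdef]
      simp [h0]
    have habs : ‖E.symm (xPhi θ p)‖ ≤ r := hsupp₀ _ hz
    set z := E.symm (xPhi θ p) with hzdef
    have hre : z.re = Real.cos p.1 + p.2 * Real.cos θ := by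
      rw [hzdef]; rfl
    have him : z.im = Real.sin p.1 + p.2 * Real.sin θ := by
      rw [hzdef]; rfl
    have hsin_eq : Real.sin (p.1 - θ) = z.im * Real.cos θ - z.re * Real.sin θ := by
      rw [hre, him, Real.sin_sub]; ring
    have habs2 : z.re ^ 2 + z.im ^ 2 ≤ r ^ 2 := by
      have h1 : ‖z‖ ^ 2 = z.re ^ 2 + z.im ^ 2 := by
        rw [Complex.sq_norm, Complex.normSq_apply]; ring
      nlinarith [norm_nonneg z]
    have hsin : Real.sin (p.1 - θ) ^ 2 ≤ r ^ 2 := by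
      rw [hsin_eq]
      nlinarith [sq_nonneg (z.re * Real.cos θ + z.im * Real.sin θ),
        Real.sin_sq_add_cos_sq θ]
    nlinarith [abs_nonneg (Real.cos (p.1 - θ)), sq_abs (Real.cos (p.1 - θ)),
      Real.sin_sq_add_cos_sq (p.1 - θ), hsin, hrsq]
  have hkey : ∀ θ : ℝ, ∫⁻ p in Set.Ioc (-π) π ×ˢ (Set.univ : Set ℝ), G (xPhi θ p)
      ≤ 2 * ENNReal.ofReal δ⁻¹ * ∫⁻ q, G q := fun θ => xPhi_key δ θ hδ0 G (hGsupp θ)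
  set I := ∫⁻ q, G q with hI
  have hWcont : Continuous (fun q : (ℝ × ℝ) × ℝ => xPhi q.1.2 (q.1.1, q.2)) := by
    unfold xPhi; fun_prop
  have h3meas : Measurable fun q : (ℝ × ℝ) × ℝ => G (xPhi q.1.2 (q.1.1, q.2)) :=
    hGmeas.comp hWcont.measurable
  have h2meas : Measurable fun p : ℝ × ℝ => ∫⁻ t : ℝ, G (xPhi p.2 (p.1, t)) :=
    h3meas.lintegral_prod_right'
  have hres : (volume : Measure (ℝ × ℝ)).restrict (Set.Ioc (-π) π ×ˢ (Set.univ : Set ℝ))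
      = (volume.restrict (Set.Ioc (-π) π)).prod volume := by
    rw [Measure.volume_eq_prod, ← Measure.prod_restrict, Measure.restrict_univ]
  have hressq : (volume : Measure (ℝ × ℝ)).restrict (Set.Ioc (-π) π ×ˢ Set.Ioc (-π) π)
      = (volume.restrict (Set.Ioc (-π) π)).prod (volume.restrict (Set.Ioc (-π) π)) := by
    rw [Measure.volume_eq_prod, ← Measure.prod_restrict]
  have hslice : ∀ θ : ℝ, ∫⁻ p in Set.Ioc (-π) π ×ˢ (Set.univ : Set ℝ), G (xPhi θ p)
      = ∫⁻ β in Set.Ioc (-π) π, ∫⁻ t : ℝ, G (xPhi θ (β, t)) := by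
    intro θ
    rw [hres]
    exact lintegral_prod _ ((hGmeas.comp (xPhi_continuous θ).measurable)).aemeasurable
  have hT : ∫⁻ p in Set.Ioc (-π) π ×ˢ Set.Ioc (-π) π, ∫⁻ t : ℝ, G (xPhi p.2 (p.1, t))
      ≤ 2 * ENNReal.ofReal δ⁻¹ * I * ENNReal.ofReal (2 * π) := by
    calc ∫⁻ p in Set.Ioc (-π) π ×ˢ Set.Ioc (-π) π, ∫⁻ t : ℝ, G (xPhi p.2 (p.1, t))
        = ∫⁻ β in Set.Ioc (-π) π, ∫⁻ θ in Set.Ioc (-π) π, ∫⁻ t : ℝ, G (xPhi θ (β, t)) := by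
          rw [hressq]
          exact lintegral_prod _ h2meas.aemeasurable
      _ = ∫⁻ θ in Set.Ioc (-π) π, ∫⁻ β in Set.Ioc (-π) π, ∫⁻ t : ℝ, G (xPhi θ (β, t)) :=
          lintegral_lintegral_swap h2meas.aemeasurable
      _ = ∫⁻ θ in Set.Ioc (-π) π, ∫⁻ p in Set.Ioc (-π) π ×ˢ (Set.univ : Set ℝ),
            G (xPhi θ p) := lintegral_congr fun θ => (hslice θ).symm
      _ ≤ ∫⁻ _ in Set.Ioc (-π) π, 2 * ENNReal.ofReal δ⁻¹ * I := lintegral_mono fun θ => hkey θ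
      _ = 2 * ENNReal.ofReal δ⁻¹ * I * ENNReal.ofReal (2 * π) := by
          rw [setLIntegral_const, Real.volume_Ioc]
          congr 1
          ring_nf
  -- null set where f and f₀ differ, pulled back to ℝ × ℝ
  obtain ⟨D', hDD', hmD', hD'⟩ := exists_measurable_superset_of_null (ae_iff.mp hae)
  set N : Set (ℝ × ℝ) := E.symm ⁻¹' D' with hNdef
  have hmN : MeasurableSet N := E.symm.measurable hmD'
  have hNnull : volume N = 0 := by
    rw [hNdef, (Complex.volume_preserving_equiv_real_prod.symm E).measure_preimage
      hmD'.nullMeasurableSet]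
    exact hD'
  set B : Set ((ℝ × ℝ) × ℝ) := {q : (ℝ × ℝ) × ℝ |
    q.1 ∈ Set.Ioc (-π) π ×ˢ Set.Ioc (-π) π ∧ xPhi q.1.2 (q.1.1, q.2) ∈ N} with hBdef
  have hmB : MeasurableSet B :=
    (measurable_fst (measurableSet_Ioc.prod measurableSet_Ioc)).inter
      (hWcont.measurable hmN)
  have hswap : MeasurePreserving (Prod.swap : ℝ × ℝ → ℝ × ℝ)
      ((volume : Measure ℝ).prod (volume : Measure ℝ))
      ((volume : Measure ℝ).prod (volume : Measure ℝ)) := Measure.measurePreserving_swap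
  have hσ : MeasurePreserving (fun q : ℝ × (ℝ × ℝ) => ((q.2.1, q.1), q.2.2))
      (volume : Measure (ℝ × (ℝ × ℝ))) (volume : Measure ((ℝ × ℝ) × ℝ)) := by
    have h1 : MeasurePreserving
        (MeasurableEquiv.prodAssoc.symm : ℝ × (ℝ × ℝ) ≃ᵐ (ℝ × ℝ) × ℝ) volume volume :=
      (volume_preserving_prodAssoc (α₁ := ℝ) (β₁ := ℝ) (γ₁ := ℝ)).symm _
    have h2 : MeasurePreserving (Prod.map (Prod.swap : ℝ × ℝ → ℝ × ℝ) (id : ℝ → ℝ))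
        (((volume : Measure ℝ).prod (volume : Measure ℝ)).prod (volume : Measure ℝ))
        (((volume : Measure ℝ).prod (volume : Measure ℝ)).prod (volume : Measure ℝ)) :=
      hswap.prod (MeasurePreserving.id volume)
    exact h2.comp h1
  have hBnull : volume B = 0 := by
    rw [← hσ.measure_preimage hmB.nullMeasurableSet]
    have hmB' : MeasurableSet ((fun q : ℝ × (ℝ × ℝ) => ((q.2.1, q.1), q.2.2)) ⁻¹' B) :=
      hσ.measurable hmB
    rw [Measure.volume_eq_prod, Measure.measure_prod_null hmB']
    apply ae_of_all
    intro θ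
    apply measure_mono_null (t := {p : ℝ × ℝ | p.1 ∈ Set.Ioc (-π) π ∧ xPhi θ p ∈ N})
    · intro x hx
      exact ⟨hx.1.1, hx.2⟩
    · exact xPhi_preimage_null θ N hmN hNnull
  have haesec : (fun p : ℝ × ℝ => volume (Prod.mk p ⁻¹' B)) =ᵐ[volume] 0 :=
    Measure.measure_ae_null_of_prod_null (by rw [← Measure.volume_eq_prod]; exact hBnull)
  -- the inner integral with f and with f₀
  set inn : ℝ × ℝ → ℂ := fun p =>
    ∫ t : ℝ, f (Complex.exp (Complex.I * p.1) + t * Complex.exp (Complex.I * p.2)) *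
      Complex.exp (-2 * Complex.I * (k : ℂ) * p.2) with hinn
  set inn₀ : ℝ × ℝ → ℂ := fun p =>
    ∫ t : ℝ, f₀ (E.symm (xPhi p.2 (p.1, t))) *
      Complex.exp (-2 * Complex.I * (k : ℂ) * p.2) with hinn₀
  have hinndef : ∀ p : ℝ × ℝ, inn p = ∫ t : ℝ, f (E.symm (xPhi p.2 (p.1, t))) *
      Complex.exp (-2 * Complex.I * (k : ℂ) * p.2) := by
    intro p
    rw [hinn]
    simp only [hE, xPhi_spec]
  have haeinner : inn =ᵐ[volume.restrict (Set.Ioc (-π) π ×ˢ Set.Ioc (-π) π)] inn₀ := by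
    filter_upwards [ae_restrict_of_ae haesec,
      ae_restrict_mem (measurableSet_Ioc.prod measurableSet_Ioc)] with p hp hpsq
    rw [hinndef p, hinn₀]
    have hp0 : volume (Prod.mk p ⁻¹' B) = 0 := hp
    have haet : ∀ᵐ t : ℝ, f (E.symm (xPhi p.2 (p.1, t))) = f₀ (E.symm (xPhi p.2 (p.1, t))) := by
      rw [ae_iff]
      apply measure_mono_null _ hp0
      intro t ht
      exact ⟨hpsq, hDD' ht⟩
    exact integral_congr_ae (haet.mono fun t ht => by simp only []; rw [ht])
  -- strong measurability of inn₀
  have hsm_g₀ : StronglyMeasurable fun q : (ℝ × ℝ) × ℝ =>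
      f₀ (E.symm (xPhi q.1.2 (q.1.1, q.2))) *
        Complex.exp (-2 * Complex.I * (k : ℂ) * q.1.2) := by
    apply StronglyMeasurable.mul
    · exact hsm₀.comp_measurable (E.symm.measurable.comp hWcont.measurable)
    · exact Continuous.stronglyMeasurable (by fun_prop)
  have hsm_inn₀ : StronglyMeasurable inn₀ := by
    rw [hinn₀]
    exact hsm_g₀.integral_prod_right'
  have haesm : AEStronglyMeasurable inn
      (volume.restrict (Set.Ioc (-π) π ×ˢ Set.Ioc (-π) π)) :=
    hsm_inn₀.aestronglyMeasurable.congr haeinner.symm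
  -- exponential factor has norm 1
  have hexp1 : ∀ x : ℝ, ‖Complex.exp (-2 * Complex.I * (k : ℂ) * x)‖₊ = 1 := by
    intro x
    have : ‖Complex.exp (-2 * Complex.I * (k : ℂ) * x)‖ = 1 := by
      rw [Complex.norm_exp]
      norm_num [Complex.mul_re]
    ext
    simpa using this
  -- the key lintegral bound
  have hlint_le : ∫⁻ p in Set.Ioc (-π) π ×ˢ Set.Ioc (-π) π, (‖inn p‖₊ : ℝ≥0∞)
      ≤ 2 * ENNReal.ofReal δ⁻¹ * I * ENNReal.ofReal (2 * π) := by
    calc ∫⁻ p in Set.Ioc (-π) π ×ˢ Set.Ioc (-π) π, (‖inn p‖₊ : ℝ≥0∞)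
        = ∫⁻ p in Set.Ioc (-π) π ×ˢ Set.Ioc (-π) π, (‖inn₀ p‖₊ : ℝ≥0∞) :=
          lintegral_congr_ae (haeinner.mono fun p hp => by simp only []; rw [hp])
      _ ≤ ∫⁻ p in Set.Ioc (-π) π ×ˢ Set.Ioc (-π) π, ∫⁻ t : ℝ,
            (‖f₀ (E.symm (xPhi p.2 (p.1, t))) *
              Complex.exp (-2 * Complex.I * (k : ℂ) * p.2)‖₊ : ℝ≥0∞) := by
          apply lintegral_mono
          intro p
          rw [hinn₀]
          exact enorm_integral_le_lintegral_enorm _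
      _ = ∫⁻ p in Set.Ioc (-π) π ×ˢ Set.Ioc (-π) π, ∫⁻ t : ℝ, G (xPhi p.2 (p.1, t)) := by
          apply lintegral_congr
          intro p
          apply lintegral_congr
          intro t
          rw [nnnorm_mul, hexp1, mul_one, hGdef]
      _ ≤ 2 * ENNReal.ofReal δ⁻¹ * I * ENNReal.ofReal (2 * π) := hT
  have hIne : I ≠ ⊤ := by
    rw [hGint, hIeq]
    exact ENNReal.ofReal_ne_top
  have hCne : 2 * ENNReal.ofReal δ⁻¹ * I * ENNReal.ofReal (2 * π) ≠ ⊤ := by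
    refine ENNReal.mul_ne_top (ENNReal.mul_ne_top (ENNReal.mul_ne_top ?_
      ENNReal.ofReal_ne_top) hIne) ENNReal.ofReal_ne_top
    norm_num
  have hint : IntegrableOn inn (Set.Ioc (-π) π ×ˢ Set.Ioc (-π) π) :=
    ⟨haesm, lt_of_le_of_lt hlint_le hCne.lt_top⟩
  constructor
  · exact hint
  · have hJnn : (0:ℝ) ≤ ∫ z : ℂ, ‖f z‖ := integral_nonneg fun z => norm_nonneg _
    set J := ∫ z : ℂ, ‖f z‖ with hJ
    have hiter : ∀ β θ : ℝ, (∫ t : ℝ,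
        f (Complex.exp (Complex.I * β) + t * Complex.exp (Complex.I * θ)) *
          Complex.exp (-2 * Complex.I * (k : ℂ) * θ)) = inn (β, θ) := fun β θ => rfl
    simp only [hiter, ← hJ]
    have hprod_int : Integrable (fun p : ℝ × ℝ => ‖inn p‖)
        ((volume.restrict (Set.Ioc (-π) π)).prod (volume.restrict (Set.Ioc (-π) π))) := by
      rw [← hressq]
      exact hint.norm
    have hiter_eq : ∫ β in Set.Ioc (-π) π, ∫ θ in Set.Ioc (-π) π, ‖inn (β, θ)‖
        = ∫ p, ‖inn p‖ ∂(volume.restrict (Set.Ioc (-π) π ×ˢ Set.Ioc (-π) π)) := by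
      rw [hressq]
      exact (integral_prod _ hprod_int).symm
    have hnorm_eq : ∫ p, ‖inn p‖ ∂(volume.restrict (Set.Ioc (-π) π ×ˢ Set.Ioc (-π) π))
        = (∫⁻ p in Set.Ioc (-π) π ×ˢ Set.Ioc (-π) π, (‖inn p‖₊ : ℝ≥0∞)).toReal :=
      integral_norm_eq_lintegral_enorm haesm
    have hRle : ∫ β in Set.Ioc (-π) π, ∫ θ in Set.Ioc (-π) π, ‖inn (β, θ)‖
        ≤ 2 * δ⁻¹ * J * (2 * π) := by
      have h1 : (2 * ENNReal.ofReal δ⁻¹ * I * ENNReal.ofReal (2 * π)).toReal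
          = 2 * δ⁻¹ * J * (2 * π) := by
        rw [hGint, hIeq, ENNReal.toReal_mul, ENNReal.toReal_mul, ENNReal.toReal_mul,
          ENNReal.toReal_ofReal (by positivity), ENNReal.toReal_ofReal hJnn,
          ENNReal.toReal_ofReal (by positivity)]
        norm_num
      rw [hiter_eq, hnorm_eq, ← h1]
      exact ENNReal.toReal_mono hCne hlint_le
    calc (1 / (2 * π) ^ 2) * ∫ β in Set.Ioc (-π) π, ∫ θ in Set.Ioc (-π) π, ‖inn (β, θ)‖
        ≤ (1 / (2 * π) ^ 2) * (2 * δ⁻¹ * J * (2 * π)) := by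
          apply mul_le_mul_of_nonneg_left hRle (by positivity)
      _ = (1 / (π * δ)) * J := by
          field_simp
end

section
/- If f ∈ L^p of the unit disc Ω for some p > 2, then the X-ray type transform X_k f(e^{iβ}, e^{iθ}) = ∫_ℝ f(e^{iβ} + t e^{iθ}) e^{-2ikθ} dt is in L¹ of the torus, with ‖X_k f‖_{L¹(Γ×S¹)} ≤ (2/π) ‖(1-s²)^{-1/2}‖_{L^q((-1,1)×(-1,1))} ‖f‖_{L^p(Ω)}, where q = p/(p-1). -/
open MeasureTheory Real
open ENNReal NNReal

noncomputable section

def Zpt (β θ t : ℝ) : ℂ := Complex.exp (Complex.I * β) + t * Complex.exp (Complex.I * θ)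

lemma exp_I_mul (β : ℝ) : Complex.exp (Complex.I * β) = ⟨Real.cos β, Real.sin β⟩ := by
  rw [mul_comm, Complex.exp_mul_I]
  apply Complex.ext <;>
    simp [Complex.cos_ofReal_re, Complex.sin_ofReal_re, Complex.cos_ofReal_im,
      Complex.sin_ofReal_im]

lemma Zpt_normSq (β θ t : ℝ) :
    Complex.normSq (Zpt β θ t) = 1 + 2 * t * Real.cos (β - θ) + t ^ 2 := by
  simp only [Zpt, exp_I_mul, Complex.normSq_apply, Complex.add_re, Complex.add_im,
    Complex.mul_re, Complex.mul_im, Complex.ofReal_re, Complex.ofReal_im]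
  have hc := Real.cos_sub β θ
  have h3 := Real.sin_sq_add_cos_sq β
  have h4 := Real.sin_sq_add_cos_sq θ
  linear_combination h3 + t^2 * h4 - 2*t*hc

lemma Zpt_abs_lt_iff (β θ t : ℝ) :
    ‖Zpt β θ t‖ < 1 ↔ t ^ 2 + 2 * Real.cos (β - θ) * t < 0 := by
  have h0 := norm_nonneg (Zpt β θ t)
  have : ‖Zpt β θ t‖ < 1 ↔ ‖Zpt β θ t‖ ^ 2 < 1 := by
    constructor
    · intro h; nlinarith
    · intro h; nlinarith
  rw [this, Complex.sq_norm, Zpt_normSq]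
  constructor <;> intro h <;> nlinarith

lemma chord_set_eq (β θ : ℝ) :
    {t : ℝ | ‖Zpt β θ t‖ < 1} =
      Set.Ioo (min 0 (-2 * Real.cos (β - θ))) (max 0 (-2 * Real.cos (β - θ))) := by
  ext t
  simp only [Set.mem_setOf_eq, Zpt_abs_lt_iff, Set.mem_Ioo]
  rcases le_or_gt (Real.cos (β - θ)) 0 with h | h
  · have h0 : (0:ℝ) ≤ -2 * Real.cos (β - θ) := by linarith
    rw [min_eq_left h0, max_eq_right h0]
    constructor
    · intro ht; constructor <;> nlinarith
    · intro ⟨h1, h2⟩; nlinarith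
  · have h0 : -2 * Real.cos (β - θ) ≤ 0 := by linarith
    rw [min_eq_right h0, max_eq_left h0]
    constructor
    · intro ht; constructor <;> nlinarith
    · intro ⟨h1, h2⟩; nlinarith

lemma chord_volume (β θ : ℝ) :
    volume {t : ℝ | ‖Zpt β θ t‖ < 1} =
      ENNReal.ofReal (2 * |Real.cos (β - θ)|) := by
  rw [chord_set_eq, Real.volume_Ioo]
  congr 1
  rcases le_or_gt (Real.cos (β - θ)) 0 with h | h
  · have h0 : (0:ℝ) ≤ -2 * Real.cos (β - θ) := by linarith
    rw [min_eq_left h0, max_eq_right h0, abs_of_nonpos h]; ring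
  · have h0 : -2 * Real.cos (β - θ) ≤ 0 := by linarith
    rw [min_eq_right h0, max_eq_left h0, abs_of_pos h]; ring

def Phi (θ : ℝ) (x : ℝ × ℝ) : ℝ × ℝ :=
  (Real.cos x.1 + x.2 * Real.cos θ, Real.sin x.1 + x.2 * Real.sin θ)

def Jmat (θ : ℝ) (x : ℝ × ℝ) : ℝ × ℝ →L[ℝ] ℝ × ℝ :=
  (((-Real.sin x.1) • (ContinuousLinearMap.fst ℝ ℝ ℝ) +
      (Real.cos θ) • (ContinuousLinearMap.snd ℝ ℝ ℝ)).prod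
   ((Real.cos x.1) • (ContinuousLinearMap.fst ℝ ℝ ℝ) +
      (Real.sin θ) • (ContinuousLinearMap.snd ℝ ℝ ℝ)))

lemma hasFDerivAt_Phi (θ : ℝ) (x : ℝ × ℝ) : HasFDerivAt (Phi θ) (Jmat θ x) x := by
  apply HasFDerivAt.prodMk
  · exact ((Real.hasDerivAt_cos x.1).comp_hasFDerivAt x hasFDerivAt_fst).add
      (hasFDerivAt_snd.mul_const (Real.cos θ))
  · exact ((Real.hasDerivAt_sin x.1).comp_hasFDerivAt x hasFDerivAt_fst).add
      (hasFDerivAt_snd.mul_const (Real.sin θ))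

lemma det_Jmat (θ : ℝ) (x : ℝ × ℝ) : (Jmat θ x).det = -Real.cos (x.1 - θ) := by
  have h : (Jmat θ x).det = LinearMap.det ((Jmat θ x) : ℝ × ℝ →ₗ[ℝ] ℝ × ℝ) := rfl
  rw [h, ← LinearMap.det_toMatrix (Module.Basis.finTwoProd ℝ), Matrix.det_fin_two]
  simp only [LinearMap.toMatrix_apply, Module.Basis.finTwoProd_zero, Module.Basis.finTwoProd_one,
    Module.Basis.coe_finTwoProd_repr, ContinuousLinearMap.coe_coe, Jmat,
    ContinuousLinearMap.prod_apply, ContinuousLinearMap.add_apply,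
    ContinuousLinearMap.smul_apply, ContinuousLinearMap.coe_fst',
    ContinuousLinearMap.coe_snd', Matrix.cons_val_zero, Matrix.cons_val_one, Matrix.head_cons]
  simp [Real.cos_sub]
  ring

lemma angle_eq_of_cos_sin {β β' : ℝ} (hb : β ∈ Set.Ioc (-π) π) (hb' : β' ∈ Set.Ioc (-π) π)
    (hc : Real.cos β = Real.cos β') (hs : Real.sin β = Real.sin β') : β = β' := by
  rcases le_or_gt 0 (Real.sin β) with h | h
  · have h1 : β ∈ Set.Icc 0 π := by
      constructor
      · by_contra hneg
        exact absurd h (not_le.2 (Real.sin_neg_of_neg_of_neg_pi_lt (not_le.1 hneg) hb.1))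
      · exact hb.2
    have h2 : β' ∈ Set.Icc 0 π := by
      constructor
      · by_contra hneg
        rw [hs] at h
        exact absurd h (not_le.2 (Real.sin_neg_of_neg_of_neg_pi_lt (not_le.1 hneg) hb'.1))
      · exact hb'.2
    exact Real.injOn_cos h1 h2 hc
  · have h1 : β < 0 := by
      by_contra hpos
      exact absurd (Real.sin_nonneg_of_nonneg_of_le_pi (not_lt.1 hpos) hb.2) (not_le.2 h)
    have h1' : β' < 0 := by
      by_contra hpos
      rw [hs] at h
      exact absurd (Real.sin_nonneg_of_nonneg_of_le_pi (not_lt.1 hpos) hb'.2) (not_le.2 h)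
    have h2 : -β ∈ Set.Icc 0 π := ⟨by linarith, by linarith [hb.1]⟩
    have h2' : -β' ∈ Set.Icc 0 π := ⟨by linarith, by linarith [hb'.1]⟩
    have := Real.injOn_cos h2 h2' (by rw [Real.cos_neg, Real.cos_neg, hc])
    linarith

lemma injOn_Phi (θ : ℝ) (ε : ℝ) (hε : ε = 1 ∨ ε = -1) :
    Set.InjOn (Phi θ) ((Set.Ioc (-π) π ×ˢ (Set.univ : Set ℝ)) ∩
      {x : ℝ × ℝ | 0 < ε * Real.cos (x.1 - θ)}) := by
  rintro ⟨β, t⟩ hβ ⟨β', t'⟩ hβ' heq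
  have hβIoc : β ∈ Set.Ioc (-π) π := hβ.1.1
  have hβ'Ioc : β' ∈ Set.Ioc (-π) π := hβ'.1.1
  have hβ2 : 0 < ε * Real.cos (β - θ) := hβ.2
  have hβ'2 : 0 < ε * Real.cos (β' - θ) := hβ'.2
  have e1 : Real.cos β + t * Real.cos θ = Real.cos β' + t' * Real.cos θ :=
    congrArg Prod.fst heq
  have e2 : Real.sin β + t * Real.sin θ = Real.sin β' + t' * Real.sin θ :=
    congrArg Prod.snd heq
  set u : ℝ := t' - t with hu
  have e1' : Real.cos β = Real.cos β' + u * Real.cos θ := by rw [hu]; linarith [e1]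
  have e2' : Real.sin β = Real.sin β' + u * Real.sin θ := by rw [hu]; linarith [e2]
  have hcc : Real.cos (β - θ) = Real.cos (β' - θ) + u := by
    rw [Real.cos_sub, Real.cos_sub, e1', e2']
    linear_combination u * Real.sin_sq_add_cos_sq θ
  have key : (Real.cos β' + u * Real.cos θ) ^ 2 + (Real.sin β' + u * Real.sin θ) ^ 2 = 1 := by
    rw [← e1', ← e2']
    linear_combination Real.sin_sq_add_cos_sq β
  have hzero : u * (u + 2 * Real.cos (β' - θ)) = 0 := by
    rw [Real.cos_sub]
    linear_combination key - Real.sin_sq_add_cos_sq β' - u ^ 2 * Real.sin_sq_add_cos_sq θ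
  have hu0 : u = 0 := by
    rcases mul_eq_zero.1 hzero with h | h
    · exact h
    · exfalso
      have hflip : Real.cos (β - θ) = -Real.cos (β' - θ) := by rw [hcc]; linarith
      rcases hε with rfl | rfl
      · simp only [one_mul] at hβ2 hβ'2; linarith
      · have h1 : Real.cos (β - θ) < 0 := by nlinarith
        have h2 : Real.cos (β' - θ) < 0 := by nlinarith
        linarith
  have hβeq : β = β' := by
    apply angle_eq_of_cos_sin hβIoc hβ'Ioc
    · rw [e1', hu0]; ring
    · rw [e2', hu0]; ring
  have hteq : t = t' := by
    have : u = t' - t := hu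
    rw [hu0] at this; linarith
  rw [hβeq, hteq]

lemma cov_bound (θ ε : ℝ) (hε : ε = 1 ∨ ε = -1) (G : ℝ × ℝ → ℝ≥0∞) :
    ∫⁻ x in ((Set.Ioc (-π) π ×ˢ (Set.univ : Set ℝ)) ∩
        {x : ℝ × ℝ | 0 < ε * Real.cos (x.1 - θ)}),
      ENNReal.ofReal |Real.cos (x.1 - θ)| * G (Phi θ x) ≤ ∫⁻ v, G v := by
  set S := (Set.Ioc (-π) π ×ˢ (Set.univ : Set ℝ)) ∩
      {x : ℝ × ℝ | 0 < ε * Real.cos (x.1 - θ)} with hS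
  have hSm : MeasurableSet S := by
    apply MeasurableSet.inter
    · exact (measurableSet_Ioc.prod MeasurableSet.univ)
    · exact measurableSet_lt measurable_const
        ((continuous_const.mul ((Real.continuous_cos.comp
          (continuous_fst.sub continuous_const)))).measurable)
  have habs : ∀ x : ℝ × ℝ, |Real.cos (x.1 - θ)| = |(Jmat θ x).det| := by
    intro x; rw [det_Jmat, abs_neg]
  have hcov := lintegral_image_eq_lintegral_abs_det_fderiv_mul volume hSm
    (fun x _ => (hasFDerivAt_Phi θ x).hasFDerivWithinAt) (injOn_Phi θ ε hε) G
  calc ∫⁻ x in S, ENNReal.ofReal |Real.cos (x.1 - θ)| * G (Phi θ x)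
      = ∫⁻ x in S, ENNReal.ofReal |(Jmat θ x).det| * G (Phi θ x) := by
        apply lintegral_congr; intro x; rw [habs]
    _ = ∫⁻ v in Phi θ '' S, G v := hcov.symm
    _ ≤ ∫⁻ v, G v := setLIntegral_le_lintegral _ _

lemma lintegral_plane_eq (G : ℂ → ℝ≥0∞) (hG : Measurable G) :
    ∫⁻ v : ℝ × ℝ, G ⟨v.1, v.2⟩ = ∫⁻ z : ℂ, G z := by
  have h := (Complex.volume_preserving_equiv_real_prod.symm).lintegral_comp hG
  calc ∫⁻ v : ℝ × ℝ, G ⟨v.1, v.2⟩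
      = ∫⁻ v : ℝ × ℝ, G (Complex.measurableEquivRealProd.symm v) := by
        apply lintegral_congr; intro v
        rw [Complex.measurableEquivRealProd_symm_apply]
    _ = ∫⁻ z : ℂ, G z := h

lemma Zpt_eq_Phi (β θ t : ℝ) : Zpt β θ t = ⟨(Phi θ (β, t)).1, (Phi θ (β, t)).2⟩ := by
  apply Complex.ext <;>
    simp [Zpt, exp_I_mul, Phi, Complex.add_re, Complex.add_im, Complex.mul_re,
      Complex.mul_im, Complex.ofReal_re, Complex.ofReal_im] <;> ring

lemma per_theta {p q : ℝ} (hpq : p.HolderConjugate q) (hq2 : q < 2)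
    (f : ℂ → ℂ) (hmeas : Measurable f)
    (hsupp : ∀ z : ℂ, 1 ≤ ‖z‖ → f z = 0) (θ : ℝ) :
    ∫⁻ β in Set.Ioc (-π) π, ∫⁻ t : ℝ, (‖f (Zpt β θ t)‖₊ : ℝ≥0∞) ≤
      (2 * ∫⁻ z : ℂ, (‖f z‖₊ : ℝ≥0∞) ^ p) ^ (1/p) * (ENNReal.ofReal (4 * π)) ^ (1/q) := by
  have hp1 : 1 < p := hpq.lt
  have hq1 : 1 < q := hpq.symm.lt
  have hq0 : (0:ℝ) < q := by linarith
  have hp0 : (0:ℝ) < p := by linarith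
  have h1q : 1/p * q = q - 1 := by
    have h := hpq.inv_add_inv_eq_one
    have h2 : 1/p = 1 - 1/q := by rw [one_div, one_div]; linarith
    rw [h2]; field_simp
  set g : ℂ → ℝ≥0∞ := fun z => (‖f z‖₊ : ℝ≥0∞) with hg
  set w : ℝ → ℝ≥0∞ := fun β => ENNReal.ofReal |Real.cos (β - θ)| with hwdef
  set Sθ : Set (ℝ × ℝ) := {x : ℝ × ℝ | ‖Zpt x.1 θ x.2‖ < 1} with hSdef
  set F₁ : ℝ × ℝ → ℝ≥0∞ := fun x => g (Zpt x.1 θ x.2) * (w x.1) ^ (1/p) with hF1def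
  set F₂ : ℝ × ℝ → ℝ≥0∞ :=
    fun x => Sθ.indicator (fun _ => (1:ℝ≥0∞)) x * (w x.1) ^ (-(1/p)) with hF2def
  set μ2 : Measure (ℝ × ℝ) := (volume.restrict (Set.Ioc (-π) π)).prod volume with hμ2def
  -- continuity/measurability facts
  have hZc : Continuous fun x : ℝ × ℝ => Zpt x.1 θ x.2 := by
    unfold Zpt
    exact (Complex.continuous_exp.comp (continuous_const.mul
      (Complex.continuous_ofReal.comp continuous_fst))).add
      ((Complex.continuous_ofReal.comp continuous_snd).mul continuous_const)
  have hgZ : Measurable fun x : ℝ × ℝ => g (Zpt x.1 θ x.2) :=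
    (hmeas.comp hZc.measurable).enorm
  have hwm : Measurable fun x : ℝ × ℝ => w x.1 :=
    ENNReal.continuous_ofReal.measurable.comp
      ((Real.continuous_cos.comp (continuous_fst.sub continuous_const)).abs).measurable
  have hSm : MeasurableSet Sθ :=
    (isOpen_lt (continuous_norm.comp hZc) continuous_const).measurableSet
  have hF1m : Measurable F₁ :=
    hgZ.mul (ENNReal.continuous_rpow_const.measurable.comp hwm)
  have hF2m : Measurable F₂ :=
    ((measurable_const.indicator hSm)).mul
      (ENNReal.continuous_rpow_const.measurable.comp hwm)
  -- step 1 : iterated to product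
  have h1 : (∫⁻ β in Set.Ioc (-π) π, ∫⁻ t : ℝ, g (Zpt β θ t)) =
      ∫⁻ x, g (Zpt x.1 θ x.2) ∂μ2 :=
    (lintegral_prod _ hgZ.aemeasurable).symm
  -- step 2 : pointwise bound
  have hpt : ∀ x : ℝ × ℝ, g (Zpt x.1 θ x.2) ≤ (F₁ * F₂) x := by
    intro x
    by_cases hx : x ∈ Sθ
    · by_cases hc : Real.cos (x.1 - θ) = 0
      · exfalso
        have := (Zpt_abs_lt_iff x.1 θ x.2).1 hx
        rw [hc] at this; nlinarith
      · have hw0 : w x.1 ≠ 0 := by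
          simp only [hwdef, ne_eq, ENNReal.ofReal_eq_zero, not_le]
          exact abs_pos.2 hc
        have hwtop : w x.1 ≠ ⊤ := ENNReal.ofReal_ne_top
        have hone : (w x.1) ^ (1/p) * (w x.1) ^ (-(1/p)) = 1 := by
          rw [← ENNReal.rpow_add _ _ hw0 hwtop]; simp
        simp only [hF1def, hF2def, Pi.mul_apply, Set.indicator_of_mem hx, one_mul]
        rw [mul_assoc, hone, mul_one]
    · have hz : f (Zpt x.1 θ x.2) = 0 := hsupp _ (not_lt.1 hx)
      simp only [hg, hz, nnnorm_zero, ENNReal.coe_zero]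
      exact zero_le
  -- step 3 : Hölder
  have hH := ENNReal.lintegral_mul_le_Lp_mul_Lq μ2 hpq hF1m.aemeasurable hF2m.aemeasurable
  -- step 4 : bound Lq factor
  have hF2q : (∫⁻ x, F₂ x ^ q ∂μ2) ≤ ENNReal.ofReal (4 * π) := by
    have hptq : ∀ x : ℝ × ℝ, F₂ x ^ q =
        Sθ.indicator (fun _ => (1:ℝ≥0∞)) x * (w x.1) ^ (1 - q) := by
      intro x
      rw [hF2def]
      rw [ENNReal.mul_rpow_of_nonneg _ _ (le_of_lt hq0), ← ENNReal.rpow_mul]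
      congr 1
      · by_cases hx : x ∈ Sθ
        · simp [Set.indicator_of_mem hx]
        · simp [Set.indicator_of_notMem hx, ENNReal.zero_rpow_of_pos hq0]
      · congr 1
        rw [neg_mul, h1q]; ring
    calc (∫⁻ x, F₂ x ^ q ∂μ2)
        = ∫⁻ β in Set.Ioc (-π) π, ∫⁻ t : ℝ,
            Sθ.indicator (fun _ => (1:ℝ≥0∞)) (β, t) * (w β) ^ (1 - q) := by
          rw [lintegral_congr hptq]
          exact lintegral_prod _ (((measurable_const.indicator hSm)).mul
            (ENNReal.continuous_rpow_const.measurable.comp hwm)).aemeasurable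
      _ ≤ ∫⁻ _ in Set.Ioc (-π) π, (2:ℝ≥0∞) := by
          apply lintegral_mono_ae
          filter_upwards with β
          have hin : (fun t : ℝ => Sθ.indicator (fun _ => (1:ℝ≥0∞)) (β, t) * (w β) ^ (1 - q))
              = fun t : ℝ => {t : ℝ | ‖Zpt β θ t‖ < 1}.indicator
                  (fun _ => (w β) ^ (1 - q)) t := by
            funext t
            by_cases ht : ‖Zpt β θ t‖ < 1
            · rw [Set.indicator_of_mem (by exact ht : (β, t) ∈ Sθ),
                Set.indicator_of_mem (by exact ht), one_mul]
            · rw [Set.indicator_of_notMem (by exact ht : (β, t) ∉ Sθ),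
                Set.indicator_of_notMem (by exact ht), zero_mul]
          rw [hin, lintegral_indicator_const, chord_volume]
          · by_cases hc : Real.cos (β - θ) = 0
            · rw [hc]; simp
            · have hw0 : w β ≠ 0 := by
                simp only [hwdef, ne_eq, ENNReal.ofReal_eq_zero, not_le]
                exact abs_pos.2 hc
              have hwtop : w β ≠ ⊤ := ENNReal.ofReal_ne_top
              have hw1 : w β ≤ 1 := by
                simp only [hwdef]
                exact ENNReal.ofReal_le_one.2 (abs_cos_le_one _)
              have h2w : ENNReal.ofReal (2 * |Real.cos (β - θ)|) = 2 * w β := by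
                rw [ENNReal.ofReal_mul (by norm_num)]
                simp [hwdef]
              rw [h2w, ← mul_assoc, mul_comm ((w β) ^ (1-q)) 2, mul_assoc]
              have : (w β) ^ (1 - q) * w β = (w β) ^ (2 - q) := by
                nth_rewrite 2 [← ENNReal.rpow_one (w β)]
                rw [← ENNReal.rpow_add _ _ hw0 hwtop]
                congr 1; ring
              rw [this]
              calc (2:ℝ≥0∞) * (w β) ^ (2 - q) ≤ 2 * 1 := by
                    exact mul_le_mul_right (ENNReal.rpow_le_one hw1 (by linarith)) 2
                _ = 2 := mul_one 2
          · rw [chord_set_eq]; exact measurableSet_Ioo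
      _ = ENNReal.ofReal (4 * π) := by
          rw [setLIntegral_const, Real.volume_Ioc]
          rw [show π - (-π) = 2 * π by ring]
          rw [show (2:ℝ≥0∞) = ENNReal.ofReal 2 by simp]
          rw [← ENNReal.ofReal_mul (by norm_num)]
          congr 1; ring
  -- step 5 : bound Lp factor
  have hF1p : (∫⁻ x, F₁ x ^ p ∂μ2) ≤ 2 * ∫⁻ z : ℂ, g z ^ p := by
    have hptp : ∀ x : ℝ × ℝ, F₁ x ^ p = g (Zpt x.1 θ x.2) ^ p * w x.1 := by
      intro x
      rw [hF1def, ENNReal.mul_rpow_of_nonneg _ _ (le_of_lt hp0), ← ENNReal.rpow_mul,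
        one_div_mul_cancel (ne_of_gt hp0), ENNReal.rpow_one]
    rw [lintegral_congr hptp]
    have hμ2eq : μ2 = (volume : Measure (ℝ × ℝ)).restrict
        (Set.Ioc (-π) π ×ˢ (Set.univ : Set ℝ)) := by
      rw [hμ2def, ← Measure.restrict_univ (μ := (volume : Measure ℝ))]
      rw [Measure.prod_restrict, Measure.restrict_univ, ← Measure.volume_eq_prod]
    rw [hμ2eq]
    set A0 : Set (ℝ × ℝ) := {x : ℝ × ℝ | Real.cos (x.1 - θ) = 0} with hA0
    set Ap : Set (ℝ × ℝ) := (Set.Ioc (-π) π ×ˢ (Set.univ : Set ℝ)) ∩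
        {x : ℝ × ℝ | 0 < 1 * Real.cos (x.1 - θ)} with hAp
    set Am : Set (ℝ × ℝ) := (Set.Ioc (-π) π ×ˢ (Set.univ : Set ℝ)) ∩
        {x : ℝ × ℝ | 0 < (-1) * Real.cos (x.1 - θ)} with hAm
    have hsub : (Set.Ioc (-π) π ×ˢ (Set.univ : Set ℝ)) ⊆ (Ap ∪ Am) ∪ A0 := by
      intro x hx
      rcases lt_trichotomy (Real.cos (x.1 - θ)) 0 with h | h | h
      · exact Or.inl (Or.inr ⟨hx, by simpa using h⟩)
      · exact Or.inr h
      · exact Or.inl (Or.inl ⟨hx, by simpa using h⟩)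
    set h : ℝ × ℝ → ℝ≥0∞ := fun x => g (Zpt x.1 θ x.2) ^ p * w x.1 with hh
    have hGm : Measurable fun z : ℂ => g z ^ p :=
      ENNReal.continuous_rpow_const.measurable.comp hmeas.enorm
    have hcov : ∀ ε : ℝ, (hε : ε = 1 ∨ ε = -1) →
        (∫⁻ x in (Set.Ioc (-π) π ×ˢ (Set.univ : Set ℝ)) ∩
          {x : ℝ × ℝ | 0 < ε * Real.cos (x.1 - θ)}, h x) ≤ ∫⁻ z : ℂ, g z ^ p := by
      intro ε hε
      have heq : ∀ x : ℝ × ℝ, h x =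
          ENNReal.ofReal |Real.cos (x.1 - θ)| * ((fun v : ℝ × ℝ => g ⟨v.1, v.2⟩ ^ p) (Phi θ x)) := by
        intro x
        rw [hh]
        simp only []
        rw [← Zpt_eq_Phi, mul_comm]
      calc (∫⁻ x in (Set.Ioc (-π) π ×ˢ (Set.univ : Set ℝ)) ∩
            {x : ℝ × ℝ | 0 < ε * Real.cos (x.1 - θ)}, h x)
          = ∫⁻ x in (Set.Ioc (-π) π ×ˢ (Set.univ : Set ℝ)) ∩
              {x : ℝ × ℝ | 0 < ε * Real.cos (x.1 - θ)},
              ENNReal.ofReal |Real.cos (x.1 - θ)| *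
                ((fun v : ℝ × ℝ => g ⟨v.1, v.2⟩ ^ p) (Phi θ x)) := lintegral_congr heq
        _ ≤ ∫⁻ v : ℝ × ℝ, g ⟨v.1, v.2⟩ ^ p := cov_bound θ ε hε _
        _ = ∫⁻ z : ℂ, g z ^ p := lintegral_plane_eq _ hGm
    have hA0z : (∫⁻ x in A0, h x) = 0 := by
      have : ∀ᵐ x ∂(volume : Measure (ℝ × ℝ)), x ∈ A0 → h x = 0 := by
        filter_upwards with x hx
        have : Real.cos (x.1 - θ) = 0 := hx
        rw [hh]
        simp only [hwdef, this, abs_zero, ENNReal.ofReal_zero, mul_zero]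
      have hA0m : MeasurableSet A0 :=
        (isClosed_eq (Real.continuous_cos.comp (continuous_fst.sub continuous_const))
          continuous_const).measurableSet
      rw [setLIntegral_congr_fun_ae hA0m this, lintegral_zero]
    calc (∫⁻ x in Set.Ioc (-π) π ×ˢ (Set.univ : Set ℝ), h x)
        ≤ ∫⁻ x in (Ap ∪ Am) ∪ A0, h x := lintegral_mono_set hsub
      _ ≤ (∫⁻ x in Ap ∪ Am, h x) + ∫⁻ x in A0, h x := lintegral_union_le _ _ _
      _ ≤ ((∫⁻ x in Ap, h x) + ∫⁻ x in Am, h x) + ∫⁻ x in A0, h x :=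
          add_le_add_left (lintegral_union_le _ _ _) _
      _ ≤ ((∫⁻ z : ℂ, g z ^ p) + ∫⁻ z : ℂ, g z ^ p) + 0 := by
          apply add_le_add
          · exact add_le_add (hcov 1 (Or.inl rfl)) (hcov (-1) (Or.inr rfl))
          · exact le_of_eq hA0z
      _ = 2 * ∫⁻ z : ℂ, g z ^ p := by rw [add_zero, two_mul]
  -- combine
  rw [h1]
  calc (∫⁻ x, g (Zpt x.1 θ x.2) ∂μ2)
      ≤ ∫⁻ x, (F₁ * F₂) x ∂μ2 := lintegral_mono hpt
    _ ≤ (∫⁻ x, F₁ x ^ p ∂μ2) ^ (1/p) * (∫⁻ x, F₂ x ^ q ∂μ2) ^ (1/q) := hH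
    _ ≤ (2 * ∫⁻ z : ℂ, g z ^ p) ^ (1/p) * (ENNReal.ofReal (4 * π)) ^ (1/q) := by
        apply mul_le_mul'
        · exact ENNReal.rpow_le_rpow hF1p (by positivity)
        · exact ENNReal.rpow_le_rpow hF2q (by positivity)

lemma weight_integrable {q : ℝ} (hq1 : 1 < q) (hq2 : q < 2) :
    IntegrableOn (fun s : ℝ => ((1 - s ^ 2) ^ (-(1:ℝ)/2)) ^ q) (Set.Ioo (-1 : ℝ) 1) := by
  have hexp : (-1 : ℝ) < -q/2 := by linarith
  have i0 : IntervalIntegrable (fun x : ℝ => x ^ (-q/2)) volume 0 2 :=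
    intervalIntegral.intervalIntegrable_rpow' hexp
  have i1 : IntervalIntegrable (fun s : ℝ => (1 - s) ^ (-q/2)) volume (-1) 1 := by
    have := i0.comp_sub_left 1
    norm_num at this
    exact this.symm
  have i2 : IntervalIntegrable (fun s : ℝ => (1 + s) ^ (-q/2)) volume (-1) 1 := by
    have := i0.comp_add_left 1
    norm_num at this
    exact this
  have hb : IntegrableOn
      (fun s : ℝ => (1 - s) ^ (-q/2) + (1 + s) ^ (-q/2)) (Set.Ioo (-1 : ℝ) 1) := by
    have h1 : IntegrableOn (fun s : ℝ => (1 - s) ^ (-q/2)) (Set.Ioo (-1 : ℝ) 1) := by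
      apply ((intervalIntegrable_iff_integrableOn_Ioo_of_le (by norm_num)).1 i1)
    have h2 : IntegrableOn (fun s : ℝ => (1 + s) ^ (-q/2)) (Set.Ioo (-1 : ℝ) 1) := by
      apply ((intervalIntegrable_iff_integrableOn_Ioo_of_le (by norm_num)).1 i2)
    exact h1.add h2
  apply Integrable.mono' hb
  · have hin : ContinuousOn (fun s : ℝ => (1 - s ^ 2) ^ (-(1:ℝ)/2)) (Set.Ioo (-1 : ℝ) 1) := by
      apply ContinuousOn.rpow_const (Continuous.continuousOn (by continuity))
      rintro x ⟨hx1, hx2⟩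
      left; nlinarith
    have hout : ContinuousOn (fun s : ℝ => ((1 - s ^ 2) ^ (-(1:ℝ)/2)) ^ q)
        (Set.Ioo (-1 : ℝ) 1) :=
      (Real.continuous_rpow_const (by linarith : (0:ℝ) ≤ q)).comp_continuousOn hin
    exact hout.aestronglyMeasurable measurableSet_Ioo
  · filter_upwards [ae_restrict_mem measurableSet_Ioo] with s hs
    obtain ⟨hs1, hs2⟩ := hs
    have h1s : 0 < 1 - s ^ 2 := by nlinarith
    have hval : ((1 - s ^ 2) ^ (-(1:ℝ)/2)) ^ q = (1 - s ^ 2) ^ (-q/2) := by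
      rw [← Real.rpow_mul (le_of_lt h1s)]
      congr 1; ring
    rw [Real.norm_eq_abs, abs_of_nonneg (Real.rpow_nonneg (Real.rpow_nonneg (by linarith) _) _)]
    rw [hval]
    rcases le_or_gt 0 s with h | h
    · have key : (1 - s ^ 2 : ℝ) ≥ 1 - s := by nlinarith
      have h1 : (1 - s ^ 2) ^ (-q/2) ≤ (1 - s) ^ (-q/2) :=
        Real.rpow_le_rpow_of_nonpos (by linarith) key (by linarith)
      have h2 : (0:ℝ) ≤ (1 + s) ^ (-q/2) := Real.rpow_nonneg (by linarith) _
      linarith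
    · have key : (1 - s ^ 2 : ℝ) ≥ 1 + s := by nlinarith
      have h1 : (1 - s ^ 2) ^ (-q/2) ≤ (1 + s) ^ (-q/2) :=
        Real.rpow_le_rpow_of_nonpos (by linarith) key (by linarith)
      have h2 : (0:ℝ) ≤ (1 - s) ^ (-q/2) := Real.rpow_nonneg (by linarith) _
      linarith

lemma square_lower {q : ℝ} (hq1 : 1 < q) (hq2 : q < 2) :
    (4 : ℝ) ≤ ∫ x in (Set.Ioo (-1 : ℝ) 1 ×ˢ Set.Ioo (-1 : ℝ) 1),
      ((1 - x.2 ^ 2) ^ (-(1 : ℝ) / 2)) ^ q := by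
  have h2D : IntegrableOn (fun x : ℝ × ℝ => ((1 - x.2 ^ 2) ^ (-(1:ℝ)/2)) ^ q)
      (Set.Ioo (-1 : ℝ) 1 ×ˢ Set.Ioo (-1 : ℝ) 1) := by
    unfold IntegrableOn
    rw [Measure.volume_eq_prod, ← Measure.prod_restrict]
    have h1 : Integrable (fun _ : ℝ => (1:ℝ)) (volume.restrict (Set.Ioo (-1 : ℝ) 1)) := by
      rw [← IntegrableOn]
      exact integrableOn_const (by rw [Real.volume_Ioo]; norm_num)
    have := h1.mul_prod (weight_integrable hq1 hq2)
    simpa using this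
  have hone : IntegrableOn (fun _ : ℝ × ℝ => (1:ℝ))
      (Set.Ioo (-1 : ℝ) 1 ×ˢ Set.Ioo (-1 : ℝ) 1) := by
    refine integrableOn_const ?_
    rw [Measure.volume_eq_prod, Measure.prod_prod]
    exact (ENNReal.mul_lt_top (by rw [Real.volume_Ioo]; exact ENNReal.ofReal_lt_top)
      (by rw [Real.volume_Ioo]; exact ENNReal.ofReal_lt_top)).ne
  have hmono : ∀ x ∈ (Set.Ioo (-1 : ℝ) 1 ×ˢ Set.Ioo (-1 : ℝ) 1),
      (1:ℝ) ≤ ((1 - x.2 ^ 2) ^ (-(1:ℝ)/2)) ^ q := by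
    rintro ⟨u, s⟩ ⟨-, hs1, hs2⟩
    have h1s : 0 < 1 - s ^ 2 := by nlinarith
    have hb : 1 ≤ (1 - s ^ 2) ^ (-(1:ℝ)/2) :=
      Real.one_le_rpow_of_pos_of_le_one_of_nonpos h1s (by nlinarith) (by norm_num)
    calc (1:ℝ) = 1 ^ q := (Real.one_rpow q).symm
      _ ≤ ((1 - s ^ 2) ^ (-(1:ℝ)/2)) ^ q := Real.rpow_le_rpow (by norm_num) hb (by linarith)
  calc (4:ℝ) = ∫ _ in (Set.Ioo (-1 : ℝ) 1 ×ˢ Set.Ioo (-1 : ℝ) 1), (1:ℝ) := by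
        rw [setIntegral_const, smul_eq_mul, mul_one]
        rw [measureReal_def, Measure.volume_eq_prod, Measure.prod_prod]
        rw [Real.volume_Ioo]
        rw [← ENNReal.ofReal_mul (by norm_num : (0:ℝ) ≤ 1 - -1)]
        rw [ENNReal.toReal_ofReal (by norm_num)]
        norm_num
    _ ≤ _ := setIntegral_mono_on hone h2D
        (measurableSet_Ioo.prod measurableSet_Ioo) hmono

lemma final_num {p q B A : ℝ} (hpq : p.HolderConjugate q) (hq2 : q < 2)
    (hB : 0 ≤ B) (hA : 4 ≤ A) :
    (1 / (2 * π) ^ 2) * (2 * π * ((2 * B) ^ (1/p) * (4 * π) ^ (1/q))) ≤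
      (2 / π) * A ^ (1/q) * B ^ (1/p) := by
  have hp1 : 1 < p := hpq.lt
  have hq1 : 1 < q := hpq.symm.lt
  have hπ : (0:ℝ) < π := Real.pi_pos
  have h2B : (2 * B) ^ (1/p) = 2 ^ (1/p) * B ^ (1/p) := Real.mul_rpow (by norm_num) hB
  have h4π : (4 * π) ^ (1/q) = 4 ^ (1/q) * π ^ (1/q) :=
    Real.mul_rpow (by norm_num) (le_of_lt hπ)
  have hconj : 1/p + 1/q = 1 := by
    have := hpq.inv_add_inv_eq_one; rw [one_div, one_div]; linarith
  have hkey : 2 ^ (1/p) * π ^ (1/q) ≤ 4 := by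
    have hhalf : 2 ^ (1/p) * π ^ (1/q) = 2 * (π/2) ^ (1/q) := by
      rw [Real.div_rpow (le_of_lt hπ) (by norm_num)]
      have h2 : (2:ℝ) ^ (1/p) = 2 ^ (1 - 1/q) := by rw [show 1 - 1/q = 1/p by linarith]
      rw [h2, Real.rpow_sub (by norm_num), Real.rpow_one]
      have h2q : (0:ℝ) < 2 ^ (1/q) := Real.rpow_pos_of_pos (by norm_num) _
      field_simp
    rw [hhalf]
    have h1 : (π/2) ^ (1/q) ≤ (π/2) ^ (1:ℝ) := by
      apply Real.rpow_le_rpow_of_exponent_le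
      · linarith [pi_gt_three]
      · rw [div_le_one (by linarith)]; linarith
    rw [Real.rpow_one] at h1
    nlinarith [pi_le_four]
  have hA' : (4:ℝ) ^ (1/q) ≤ A ^ (1/q) :=
    Real.rpow_le_rpow (by norm_num) hA (by positivity)
  have h4q : (0:ℝ) < 4 ^ (1/q) := Real.rpow_pos_of_pos (by norm_num) _
  have hBp : (0:ℝ) ≤ B ^ (1/p) := Real.rpow_nonneg hB _
  have hπq : (0:ℝ) ≤ π ^ (1/q) := Real.rpow_nonneg (le_of_lt hπ) _
  have h2p : (0:ℝ) ≤ 2 ^ (1/p) := Real.rpow_nonneg (by norm_num) _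
  calc (1 / (2 * π) ^ 2) * (2 * π * ((2 * B) ^ (1/p) * (4 * π) ^ (1/q)))
      = (2 ^ (1/p) * π ^ (1/q)) * (4 ^ (1/q) * B ^ (1/p)) * (1 / (2 * π)) := by
        rw [h2B, h4π]; field_simp
    _ ≤ 4 * (4 ^ (1/q) * B ^ (1/p)) * (1 / (2 * π)) := by
        apply mul_le_mul_of_nonneg_right
          (mul_le_mul_of_nonneg_right hkey (by positivity)) (by positivity)
    _ = (2 / π) * 4 ^ (1/q) * B ^ (1/p) := by field_simp; ring
    _ ≤ (2 / π) * A ^ (1/q) * B ^ (1/p) := by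
        apply mul_le_mul_of_nonneg_right
          (mul_le_mul_of_nonneg_left hA' (by positivity)) hBp

lemma Ip_eq {p : ℝ} (hp0 : 0 ≤ p) (f : ℂ → ℂ)
    (hfLp : Integrable (fun z : ℂ => ‖f z‖ ^ p)) :
    ∫⁻ z : ℂ, (‖f z‖₊ : ℝ≥0∞) ^ p = ENNReal.ofReal (∫ z : ℂ, ‖f z‖ ^ p) := by
  rw [ofReal_integral_eq_lintegral_ofReal hfLp
    (Filter.Eventually.of_forall fun z => Real.rpow_nonneg (norm_nonneg _) _)]
  apply lintegral_congr
  intro z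
  rw [← enorm_eq_nnnorm, ← ofReal_norm,
    ENNReal.ofReal_rpow_of_nonneg (norm_nonneg _) hp0]


/-- If `f ∈ L^p` of the unit disc for some `p > 2` (extended by zero outside), then
`X_k f` is in `L¹` of the torus, with
`‖X_k f‖_{L¹(Γ×S¹)} ≤ (2/π) ‖(1-s²)^{-1/2}‖_{L^q(T)} ‖f‖_{L^p}`, `q = p/(p-1)`. -/
theorem stmt_6 (p : ℝ) (hp : 2 < p) (q : ℝ) (hq : q = p / (p - 1)) (k : ℤ) (f : ℂ → ℂ)
    (hmeas : Measurable f)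
    (hfLp : Integrable (fun z : ℂ => ‖f z‖ ^ p))
    (hsupp : ∀ z : ℂ, 1 ≤ ‖z‖ → f z = 0) :
    IntegrableOn (fun pt : ℝ × ℝ =>
      ∫ t : ℝ, f (Complex.exp (Complex.I * pt.1) + t * Complex.exp (Complex.I * pt.2)) *
        Complex.exp (-2 * Complex.I * (k : ℂ) * pt.2))
      (Set.Ioc (-π) π ×ˢ Set.Ioc (-π) π) ∧
    (1 / (2 * π) ^ 2) * (∫ β in Set.Ioc (-π) π, ∫ θ in Set.Ioc (-π) π,
        ‖∫ t : ℝ,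
          f (Complex.exp (Complex.I * β) + t * Complex.exp (Complex.I * θ)) *
            Complex.exp (-2 * Complex.I * (k : ℂ) * θ)‖)
      ≤ (2 / π) *
        ((∫ x in (Set.Ioo (-1 : ℝ) 1 ×ˢ Set.Ioo (-1 : ℝ) 1),
            ((1 - x.2 ^ 2) ^ (-(1 : ℝ) / 2)) ^ q) ^ (1 / q)) *
        ((∫ z : ℂ, ‖f z‖ ^ p) ^ (1 / p)) := by
  have hp0 : (0:ℝ) < p := by linarith
  have hpq : p.HolderConjugate q := hq ▸ Real.HolderConjugate.conjExponent (by linarith)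
  have hq1 : 1 < q := hpq.symm.lt
  have hq2 : q < 2 := by rw [hq, div_lt_iff₀ (by linarith)]; linarith
  have hπ : (0:ℝ) < π := Real.pi_pos
  set g : ℂ → ℝ≥0∞ := fun z => (‖f z‖₊ : ℝ≥0∞) with hgdef
  set B : ℝ := ∫ z : ℂ, ‖f z‖ ^ p with hBdef
  have hB0 : (0:ℝ) ≤ B :=
    integral_nonneg fun z => Real.rpow_nonneg (norm_nonneg _) _
  have hIp : (∫⁻ z : ℂ, g z ^ p) = ENNReal.ofReal B := Ip_eq (le_of_lt hp0) f hfLp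
  set D : ℝ := 2 * π * ((2 * B) ^ (1/p) * (4 * π) ^ (1/q)) with hDdef
  have hD0 : (0:ℝ) ≤ D := by positivity
  set K : ℝ → ℝ → ℝ≥0∞ := fun β θ => ∫⁻ t : ℝ, g (Zpt β θ t) with hKdef
  -- measurability
  have hZm : Measurable (fun x : (ℝ × ℝ) × ℝ => Zpt x.1.1 x.1.2 x.2) := by
    apply Continuous.measurable
    unfold Zpt
    exact (Complex.continuous_exp.comp (continuous_const.mul
        (Complex.continuous_ofReal.comp (continuous_fst.comp continuous_fst)))).add
      ((Complex.continuous_ofReal.comp continuous_snd).mul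
        (Complex.continuous_exp.comp (continuous_const.mul
          (Complex.continuous_ofReal.comp (continuous_snd.comp continuous_fst)))))
  have hgZm : Measurable (fun x : (ℝ × ℝ) × ℝ => g (Zpt x.1.1 x.1.2 x.2)) :=
    (hmeas.comp hZm).enorm
  have hKmeas : Measurable (fun x : ℝ × ℝ => K x.1 x.2) :=
    Measurable.lintegral_prod_right' (f := fun x : (ℝ × ℝ) × ℝ => g (Zpt x.1.1 x.1.2 x.2)) hgZm
  -- per-θ bound and master bound
  set C : ℝ≥0∞ := (2 * ENNReal.ofReal B) ^ (1/p) * (ENNReal.ofReal (4 * π)) ^ (1/q) with hCdef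
  have hperθ : ∀ θ : ℝ, (∫⁻ β in Set.Ioc (-π) π, K β θ) ≤ C := by
    intro θ
    have h := per_theta hpq hq2 f hmeas hsupp θ
    rw [hIp] at h
    exact h
  have hswap : (∫⁻ β in Set.Ioc (-π) π, ∫⁻ θ in Set.Ioc (-π) π, K β θ)
      = ∫⁻ θ in Set.Ioc (-π) π, ∫⁻ β in Set.Ioc (-π) π, K β θ :=
    lintegral_lintegral_swap hKmeas.aemeasurable
  have hmaster : (∫⁻ β in Set.Ioc (-π) π, ∫⁻ θ in Set.Ioc (-π) π, K β θ)
      ≤ ENNReal.ofReal D := by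
    rw [hswap]
    calc (∫⁻ θ in Set.Ioc (-π) π, ∫⁻ β in Set.Ioc (-π) π, K β θ)
        ≤ ∫⁻ _ in Set.Ioc (-π) π, C := lintegral_mono fun θ => hperθ θ
      _ = C * volume (Set.Ioc (-π) π) := setLIntegral_const _ _
      _ = C * ENNReal.ofReal (2 * π) := by
          rw [Real.volume_Ioc, show π - (-π) = 2 * π by ring]
      _ = ENNReal.ofReal D := by
          rw [hCdef, hDdef]
          rw [show (2:ℝ≥0∞) = ENNReal.ofReal 2 by simp,
            ← ENNReal.ofReal_mul (by norm_num),
            ENNReal.ofReal_rpow_of_nonneg (by positivity) (by positivity),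
            ENNReal.ofReal_rpow_of_nonneg (by positivity) (by positivity),
            ← ENNReal.ofReal_mul (by positivity),
            ← ENNReal.ofReal_mul (by positivity)]
          congr 1
          ring
  have hmaster_ne : (∫⁻ β in Set.Ioc (-π) π, ∫⁻ θ in Set.Ioc (-π) π, K β θ) ≠ ⊤ :=
    (lt_of_le_of_lt hmaster ENNReal.ofReal_lt_top).ne
  -- norm of the phase factor
  have he : ∀ θ : ℝ, (‖Complex.exp (-2 * Complex.I * (k : ℂ) * (θ:ℝ))‖₊ : ℝ≥0∞) = 1 := by
    intro θ
    have hre : (-2 * Complex.I * (k : ℂ) * (θ:ℝ)).re = 0 := by simp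
    have hnorm : ‖Complex.exp (-2 * Complex.I * (k : ℂ) * (θ:ℝ))‖ = 1 := by
      rw [Complex.norm_exp, hre, Real.exp_zero]
    rw [← enorm_eq_nnnorm, ← ofReal_norm, hnorm]
    simp
  -- bound for the inner Bochner integral
  have hKb : ∀ β θ : ℝ, (‖∫ t : ℝ,
      f (Complex.exp (Complex.I * (β:ℝ)) + (t:ℝ) * Complex.exp (Complex.I * (θ:ℝ))) *
        Complex.exp (-2 * Complex.I * (k : ℂ) * (θ:ℝ))‖₊ : ℝ≥0∞) ≤ K β θ := by
    intro β θ
    calc (‖∫ t : ℝ,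
        f (Complex.exp (Complex.I * (β:ℝ)) + (t:ℝ) * Complex.exp (Complex.I * (θ:ℝ))) *
          Complex.exp (-2 * Complex.I * (k : ℂ) * (θ:ℝ))‖₊ : ℝ≥0∞)
        ≤ ∫⁻ t : ℝ, ‖f (Zpt β θ t) * Complex.exp (-2 * Complex.I * (k : ℂ) * (θ:ℝ))‖₊ :=
          enorm_integral_le_lintegral_enorm _
      _ = K β θ := by
          apply lintegral_congr
          intro t
          rw [nnnorm_mul, ENNReal.coe_mul, he θ, mul_one]
  -- Part 1 : integrability on the box
  have hFFsm : StronglyMeasurable (fun x : (ℝ × ℝ) × ℝ =>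
      f (Zpt x.1.1 x.1.2 x.2) * Complex.exp (-2 * Complex.I * (k : ℂ) * (x.1.2:ℝ))) := by
    apply Measurable.stronglyMeasurable
    apply (hmeas.comp hZm).mul
    apply Continuous.measurable
    exact Complex.continuous_exp.comp (continuous_const.mul
      (Complex.continuous_ofReal.comp (continuous_snd.comp continuous_fst)))
  have hFFm : StronglyMeasurable (fun pt : ℝ × ℝ =>
      ∫ t : ℝ, f (Complex.exp (Complex.I * pt.1) + t * Complex.exp (Complex.I * pt.2)) *
        Complex.exp (-2 * Complex.I * (k : ℂ) * pt.2)) :=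
    hFFsm.integral_prod_right'
  have hbox : (∫⁻ pt in (Set.Ioc (-π) π ×ˢ Set.Ioc (-π) π),
      (‖∫ t : ℝ, f (Complex.exp (Complex.I * pt.1) + t * Complex.exp (Complex.I * pt.2)) *
        Complex.exp (-2 * Complex.I * (k : ℂ) * pt.2)‖₊ : ℝ≥0∞)) ≤ ENNReal.ofReal D := by
    rw [Measure.volume_eq_prod, ← Measure.prod_restrict]
    rw [lintegral_prod _ (hFFm.measurable.nnnorm.coe_nnreal_ennreal).aemeasurable]
    calc (∫⁻ β in Set.Ioc (-π) π, ∫⁻ θ in Set.Ioc (-π) π,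
        (‖∫ t : ℝ, f (Complex.exp (Complex.I * β) + t * Complex.exp (Complex.I * θ)) *
          Complex.exp (-2 * Complex.I * (k : ℂ) * θ)‖₊ : ℝ≥0∞))
        ≤ ∫⁻ β in Set.Ioc (-π) π, ∫⁻ θ in Set.Ioc (-π) π, K β θ :=
          lintegral_mono fun β => lintegral_mono fun θ => hKb β θ
      _ ≤ ENNReal.ofReal D := hmaster
  constructor
  · refine ⟨hFFm.aestronglyMeasurable, ?_⟩
    show (∫⁻ pt in (Set.Ioc (-π) π ×ˢ Set.Ioc (-π) π), _) < ⊤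
    exact lt_of_le_of_lt hbox ENNReal.ofReal_lt_top
  -- Part 2 : the inequality
  · have hstep1 : (∫ β in Set.Ioc (-π) π, ∫ θ in Set.Ioc (-π) π,
        ‖∫ t : ℝ,
          f (Complex.exp (Complex.I * β) + t * Complex.exp (Complex.I * θ)) *
            Complex.exp (-2 * Complex.I * (k : ℂ) * θ)‖) ≤ D := by
      set H : ℝ → ℝ := fun β => ∫ θ in Set.Ioc (-π) π,
        ‖∫ t : ℝ,
          f (Complex.exp (Complex.I * β) + t * Complex.exp (Complex.I * θ)) *
            Complex.exp (-2 * Complex.I * (k : ℂ) * θ)‖ with hHdef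
      have hHb : ∀ β : ℝ, ENNReal.ofReal ‖H β‖ ≤ ∫⁻ θ in Set.Ioc (-π) π, K β θ := by
        intro β
        rw [ofReal_norm, enorm_eq_nnnorm]
        calc (‖H β‖₊ : ℝ≥0∞)
            ≤ ∫⁻ θ in Set.Ioc (-π) π, (‖‖∫ t : ℝ,
                f (Complex.exp (Complex.I * β) + t * Complex.exp (Complex.I * θ)) *
                  Complex.exp (-2 * Complex.I * (k : ℂ) * θ)‖‖₊ : ℝ≥0∞) :=
              enorm_integral_le_lintegral_enorm _
          _ ≤ ∫⁻ θ in Set.Ioc (-π) π, K β θ := by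
              apply lintegral_mono
              intro θ
              have habs : ∀ v : ℂ, (‖‖v‖‖₊ : ℝ≥0∞) = (‖v‖₊ : ℝ≥0∞) := by
                intro v
                congr 1
                apply NNReal.coe_injective
                simp [coe_nnnorm, Real.norm_eq_abs, abs_of_nonneg (norm_nonneg v)]
              have hthis := hKb β θ
              rw [← habs] at hthis
              exact hthis
      calc (∫ β in Set.Ioc (-π) π, H β)
          ≤ ‖∫ β in Set.Ioc (-π) π, H β‖ := le_abs_self _
        _ ≤ (∫⁻ β in Set.Ioc (-π) π, ENNReal.ofReal ‖H β‖).toReal :=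
            norm_integral_le_lintegral_norm _
        _ ≤ D := by
            apply ENNReal.toReal_le_of_le_ofReal hD0
            calc (∫⁻ β in Set.Ioc (-π) π, ENNReal.ofReal ‖H β‖)
                ≤ ∫⁻ β in Set.Ioc (-π) π, ∫⁻ θ in Set.Ioc (-π) π, K β θ :=
                  lintegral_mono fun β => hHb β
              _ ≤ ENNReal.ofReal D := hmaster
    have hA : (4:ℝ) ≤ ∫ x in (Set.Ioo (-1 : ℝ) 1 ×ˢ Set.Ioo (-1 : ℝ) 1),
        ((1 - x.2 ^ 2) ^ (-(1 : ℝ) / 2)) ^ q := square_lower hq1 hq2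
    calc (1 / (2 * π) ^ 2) * (∫ β in Set.Ioc (-π) π, ∫ θ in Set.Ioc (-π) π,
        ‖∫ t : ℝ,
          f (Complex.exp (Complex.I * β) + t * Complex.exp (Complex.I * θ)) *
            Complex.exp (-2 * Complex.I * (k : ℂ) * θ)‖)
        ≤ (1 / (2 * π) ^ 2) * D := by
          apply mul_le_mul_of_nonneg_left hstep1 (by positivity)
      _ ≤ (2 / π) *
          ((∫ x in (Set.Ioo (-1 : ℝ) 1 ×ˢ Set.Ioo (-1 : ℝ) 1),
              ((1 - x.2 ^ 2) ^ (-(1 : ℝ) / 2)) ^ q) ^ (1 / q)) * (B ^ (1/p)) :=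
          final_num hpq hq2 hB0 hA

end
end

section
/- Let Ω be the open unit disc and m even. If u ∈ C¹(cl(Ω) × S¹) solves θ·∇u(z,θ) = 2⟨f(z), θ^m⟩ in Ω × S¹ with u = −Xf on the influx boundary Γ₋, where f is a symmetric tensor of even order m, then u is an odd function of the direction: u(z, θ) = −u(z, −θ) for all (z, θ). -/
open MeasureTheory
open scoped RealInnerProductSpace

set_option maxHeartbeats 1000000

/-- The pairing `⟨f(z), θ^m⟩`. -/
noncomputable def tensorPairing (m : ℕ)
    (f : (Fin m → Fin 2) → EuclideanSpace ℝ (Fin 2) → ℝ)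
    (z θ : EuclideanSpace ℝ (Fin 2)) : ℝ :=
  ∑ i : Fin m → Fin 2, f i z * ∏ j : Fin m, θ (i j)

/-- The X-ray transform `Xf(z,θ) = ∫ ⟨f(z+tθ), θ^m⟩ dt`. -/
noncomputable def xrayT (m : ℕ)
    (f : (Fin m → Fin 2) → EuclideanSpace ℝ (Fin 2) → ℝ)
    (z θ : EuclideanSpace ℝ (Fin 2)) : ℝ :=
  ∫ t : ℝ, tensorPairing m f (z + t • θ) θ


lemma tp_neg (m : ℕ) (hm : Even m)
    (f : (Fin m → Fin 2) → EuclideanSpace ℝ (Fin 2) → ℝ)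
    (z θ : EuclideanSpace ℝ (Fin 2)) :
    tensorPairing m f z (-θ) = tensorPairing m f z θ := by
  unfold tensorPairing
  refine Finset.sum_congr rfl fun i _ => ?_
  congr 1
  have : ∀ j : Fin m, (-θ) (i j) = (-1) * θ (i j) := fun j => by
    simp [neg_one_mul]
  simp_rw [this]
  rw [Finset.prod_mul_distrib, Finset.prod_const]
  simp [hm.neg_one_pow]

lemma tp_integrable (m : ℕ)
    (f : (Fin m → Fin 2) → EuclideanSpace ℝ (Fin 2) → ℝ)
    (hint : ∀ i, Integrable (f i)) (θ : EuclideanSpace ℝ (Fin 2)) :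
    Integrable (fun z => tensorPairing m f z θ) := by
  unfold tensorPairing
  exact integrable_finset_sum _ fun i _ => (hint i).mul_const _

lemma tp_zero (m : ℕ)
    (f : (Fin m → Fin 2) → EuclideanSpace ℝ (Fin 2) → ℝ)
    (hsupp : ∀ i, tsupport (f i) ⊆ Metric.ball (0 : EuclideanSpace ℝ (Fin 2)) 1)
    (y θ : EuclideanSpace ℝ (Fin 2)) (hy : 1 ≤ ‖y‖) :
    tensorPairing m f y θ = 0 := by
  unfold tensorPairing
  refine Finset.sum_eq_zero fun i _ => ?_
  have : f i y = 0 := by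
    apply image_eq_zero_of_notMem_tsupport
    intro h
    have := hsupp i h
    rw [Metric.mem_ball, dist_zero_right] at this
    linarith
  simp [this]

lemma lim_zero {α : Type*} [TopologicalSpace α] {G : α → ℝ} {F : Filter α} [F.NeBot] {a : ℝ}
    (hG : Filter.Tendsto G F (nhds a)) (h0 : ∀ᶠ s in F, G s = 0) : a = 0 := by
  have : Filter.Tendsto G F (nhds 0) := by
    have : G =ᶠ[F] (fun _ => (0:ℝ)) := h0
    exact Filter.Tendsto.congr' this.symm  tendsto_const_nhds
  exact tendsto_nhds_unique hG this

lemma neBot_inter {A U : Set ℝ} (hA : volume Aᶜ = 0) (hU : IsOpen U) {x : ℝ} (hx : x ∈ U) :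
    (nhdsWithin x (A ∩ U)).NeBot := by
  rw [← mem_closure_iff_nhdsWithin_neBot, mem_closure_iff]
  intro o ho hxo
  by_contra hemp
  rw [Set.not_nonempty_iff_eq_empty] at hemp
  have hsub : o ∩ U ⊆ Aᶜ := by
    intro y hy hyA
    exact absurd (Set.eq_empty_iff_forall_notMem.1 hemp y ⟨hy.1, hyA, hy.2⟩) (fun h => h)
  have hpos : 0 < volume (o ∩ U) := (ho.inter hU).measure_pos volume ⟨x, hxo, hx⟩
  have : volume (o ∩ U) = 0 := measure_mono_null hsub hA
  exact hpos.ne' this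

lemma fubini_lines (m : ℕ)
    (f : (Fin m → Fin 2) → EuclideanSpace ℝ (Fin 2) → ℝ)
    (hint : ∀ i, Integrable (f i))
    (θp θ : EuclideanSpace ℝ (Fin 2)) (horth : ⟪θp, θ⟫ = 0)
    (hnp : ‖θp‖ = 1) (hnt : ‖θ‖ = 1) :
    ∀ᵐ s : ℝ, Integrable (fun t : ℝ => tensorPairing m f (s • θp + t • θ) θ) := by
  have e1 : ⟪θp, θp⟫ = 1 := by rw [real_inner_self_eq_norm_sq, hnp]; norm_num
  have e2 : ⟪θ, θ⟫ = 1 := by rw [real_inner_self_eq_norm_sq, hnt]; norm_num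
  have e3 : ⟪θ, θp⟫ = 0 := by rw [real_inner_comm]; exact horth
  have hON : Orthonormal ℝ ![θp, θ] := by
    rw [orthonormal_iff_ite]
    intro i j
    fin_cases i <;> fin_cases j
    · simpa using e1
    · simpa using horth
    · simpa using e3
    · simpa using e2
  have hcard : Fintype.card (Fin 2) = Module.finrank ℝ (EuclideanSpace ℝ (Fin 2)) := by
    simp [finrank_euclideanSpace_fin]
  let b0 := basisOfLinearIndependentOfCardEqFinrank hON.linearIndependent hcard
  have hb0 : ⇑b0 = ![θp, θ] := coe_basisOfLinearIndependentOfCardEqFinrank _ _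
  let b : OrthonormalBasis (Fin 2) ℝ (EuclideanSpace ℝ (Fin 2)) :=
    OrthonormalBasis.mk hON (by rw [← hb0]; exact b0.span_eq.ge)
  have hb : ⇑b = ![θp, θ] := OrthonormalBasis.coe_mk _ _
  -- the affine parametrization of the plane is measure preserving
  have mp1 : MeasurePreserving (⇑(MeasurableEquiv.finTwoArrow (α := ℝ)).symm)
      volume volume := (volume_preserving_finTwoArrow ℝ).symm
  have mp2 : MeasurePreserving (⇑(MeasurableEquiv.toLp 2 (Fin 2 → ℝ)))
      volume volume := (EuclideanSpace.volume_preserving_symm_measurableEquiv_toLp (Fin 2)).symm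
  have mp3 : MeasurePreserving (⇑b.repr.symm) volume volume :=
    b.measurePreserving_repr_symm
  have mp : MeasurePreserving
      (fun p : ℝ × ℝ => p.1 • θp + p.2 • θ) volume volume := by
    have hcomp := mp3.comp (mp2.comp mp1)
    have hfun : (⇑b.repr.symm ∘ (⇑(MeasurableEquiv.toLp 2 (Fin 2 → ℝ)) ∘
        ⇑(MeasurableEquiv.finTwoArrow (α := ℝ)).symm))
        = fun p : ℝ × ℝ => p.1 • θp + p.2 • θ := by
      funext p
      simp only [Function.comp_apply]
      have h1 : (MeasurableEquiv.finTwoArrow (α := ℝ)).symm p = ![p.1, p.2] := rfl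
      rw [h1]
      have h2 : (MeasurableEquiv.toLp 2 (Fin 2 → ℝ)) ![p.1, p.2]
          = (WithLp.equiv 2 (Fin 2 → ℝ)).symm ![p.1, p.2] := rfl
      rw [h2]
      rw [← b.sum_repr_symm]
      rw [Fin.sum_univ_two]
      have hb1 : b 0 = θp := by rw [hb]; rfl
      have hb2 : b 1 = θ := by rw [hb]; rfl
      rw [hb1, hb2]
      rfl
    rwa [hfun] at hcomp
  have hPint : Integrable (fun y => tensorPairing m f y θ) := tp_integrable m f hint θ
  have hcompInt : Integrable
      ((fun y => tensorPairing m f y θ) ∘ fun p : ℝ × ℝ => p.1 • θp + p.2 • θ) volume :=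
    (mp.integrable_comp hPint.aestronglyMeasurable).2 hPint
  rw [Measure.volume_eq_prod] at hcompInt
  have hae := hcompInt.prod_right_ae
  filter_upwards [hae] with s hs
  exact hs

lemma chord (q : ℕ)
    (f : (Fin (2 * q) → Fin 2) → EuclideanSpace ℝ (Fin 2) → ℝ)
    (hsupp : ∀ i, tsupport (f i) ⊆ Metric.ball (0 : EuclideanSpace ℝ (Fin 2)) 1)
    (u : EuclideanSpace ℝ (Fin 2) → EuclideanSpace ℝ (Fin 2) → ℝ)
    (hu_cont : ContinuousOn
      (fun p : EuclideanSpace ℝ (Fin 2) × EuclideanSpace ℝ (Fin 2) => u p.1 p.2)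
      (Metric.closedBall 0 1 ×ˢ Metric.sphere 0 1))
    (hu_pde : ∀ z ∈ Metric.ball (0 : EuclideanSpace ℝ (Fin 2)) 1,
      ∀ θ : EuclideanSpace ℝ (Fin 2), ‖θ‖ = 1 →
        HasDerivAt (fun t : ℝ => u (z + t • θ) θ) (2 * tensorPairing (2 * q) f z θ) 0)
    (hu_bc : ∀ x θ : EuclideanSpace ℝ (Fin 2), ‖x‖ = 1 → ‖θ‖ = 1 → ⟪x, θ⟫ < 0 →
      u x θ = - xrayT (2 * q) f x θ)
    (z θ : EuclideanSpace ℝ (Fin 2)) (hθ : ‖θ‖ = 1) (hz : ‖z‖ < 1)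
    (hgood : Integrable (fun t : ℝ => tensorPairing (2 * q) f (z + t • θ) θ)) :
    u z θ + u z (-θ) = 0 := by
  set h : ℝ → ℝ := fun t => tensorPairing (2 * q) f (z + t • θ) θ with hh
  set c : ℝ := ⟪z, θ⟫ with hc
  have hθn : ‖-θ‖ = 1 := by rw [norm_neg]; exact hθ
  have hnorm : ∀ t : ℝ, ‖z + t • θ‖ ^ 2 = (t + c) ^ 2 + (‖z‖ ^ 2 - c ^ 2) := by
    intro t
    have h1 : ⟪z, t • θ⟫ = t * c := by rw [real_inner_smul_right]
    have h2 : ‖t • θ‖ = |t| := by rw [norm_smul, hθ, Real.norm_eq_abs, mul_one]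
    rw [norm_add_sq_real, h1, h2, sq_abs]
    ring
  have hzsq : ‖z‖ ^ 2 < 1 := by nlinarith [norm_nonneg z]
  set r : ℝ := Real.sqrt (1 - ‖z‖ ^ 2 + c ^ 2) with hrdef
  have hr2 : r ^ 2 = 1 - ‖z‖ ^ 2 + c ^ 2 := Real.sq_sqrt (by nlinarith [sq_nonneg c])
  have hr_pos : 0 < r := Real.sqrt_pos.2 (by nlinarith [sq_nonneg c])
  have hrc : |c| < r := by nlinarith [sq_abs c, abs_nonneg c]
  set ta : ℝ := -c - r with hta
  set tb : ℝ := -c + r with htb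
  have htab : ta < tb := by rw [hta, htb]; linarith
  have hta0 : ta < 0 := by
    have h1 := neg_abs_le c
    rw [hta]; linarith
  have htb0 : 0 < tb := by
    have h1 := le_abs_self c
    rw [htb]; linarith
  -- norms along the line
  have hnorm_lt : ∀ t ∈ Set.Ioo ta tb, ‖z + t • θ‖ < 1 := by
    intro t ht
    have h1 : (t + c) ^ 2 < r ^ 2 := by
      obtain ⟨h2, h3⟩ := ht
      rw [hta] at h2; rw [htb] at h3
      nlinarith
    have h4 := hnorm t
    nlinarith [norm_nonneg (z + t • θ)]
  have hnorm_ge : ∀ t : ℝ, t ∉ Set.Ioo ta tb → 1 ≤ ‖z + t • θ‖ := by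
    intro t ht
    rw [Set.mem_Ioo, not_and_or, not_lt, not_lt] at ht
    have h1 : r ^ 2 ≤ (t + c) ^ 2 := by
      rcases ht with h | h
      · rw [hta] at h; nlinarith
      · rw [htb] at h; nlinarith
    have h4 := hnorm t
    nlinarith [norm_nonneg (z + t • θ)]
  have hnorm_le : ∀ t ∈ Set.Icc ta tb, ‖z + t • θ‖ ≤ 1 := by
    intro t ht
    obtain ⟨h2, h3⟩ := ht
    rw [hta] at h2; rw [htb] at h3
    have h1 : (t + c) ^ 2 ≤ r ^ 2 := by nlinarith
    have h4 := hnorm t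
    nlinarith [norm_nonneg (z + t • θ)]
  have hna : ‖z + ta • θ‖ = 1 := by
    have h4 := hnorm ta
    have : (ta + c) ^ 2 = r ^ 2 := by rw [hta]; ring
    nlinarith [norm_nonneg (z + ta • θ)]
  have hnb : ‖z + tb • θ‖ = 1 := by
    have h4 := hnorm tb
    have : (tb + c) ^ 2 = r ^ 2 := by rw [htb]; ring
    nlinarith [norm_nonneg (z + tb • θ)]
  -- vanishing of h outside the chord
  have hvanish : ∀ t : ℝ, t ∉ Set.Ioo ta tb → h t = 0 := by
    intro t ht
    show tensorPairing (2 * q) f (z + t • θ) θ = 0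
    exact tp_zero (2 * q) f hsupp (z + t • θ) θ (hnorm_ge t ht)
  -- derivatives
  have hderiv1 : ∀ t ∈ Set.Ioo ta tb, HasDerivAt (fun s : ℝ => u (z + s • θ) θ) (2 * h t) t := by
    intro t ht
    have hball : z + t • θ ∈ Metric.ball (0 : EuclideanSpace ℝ (Fin 2)) 1 := by
      rw [Metric.mem_ball, dist_zero_right]; exact hnorm_lt t ht
    have H := hu_pde _ hball θ hθ
    have H0 : HasDerivAt (fun s : ℝ => u (z + t • θ + s • θ) θ)
        (2 * tensorPairing (2 * q) f (z + t • θ) θ) (t - t) := by rwa [sub_self]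
    have H2 := H0.comp_sub_const t t
    have hfun : (fun x : ℝ => u (z + t • θ + (x - t) • θ) θ)
        = fun s : ℝ => u (z + s • θ) θ := by
      funext x
      congr 1
      rw [sub_smul]
      module
    rw [hfun] at H2
    exact H2
  have hderiv2 : ∀ t ∈ Set.Ioo ta tb,
      HasDerivAt (fun s : ℝ => u (z + s • θ) (-θ)) (-(2 * h t)) t := by
    intro t ht
    have hball : z + t • θ ∈ Metric.ball (0 : EuclideanSpace ℝ (Fin 2)) 1 := by
      rw [Metric.mem_ball, dist_zero_right]; exact hnorm_lt t ht
    have H := hu_pde _ hball (-θ) hθn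
    have H0 : HasDerivAt (fun s : ℝ => u (z + t • θ + s • (-θ)) (-θ))
        (2 * tensorPairing (2 * q) f (z + t • θ) (-θ)) (t - t) := by rwa [sub_self]
    have H2 := H0.comp_const_sub t t
    have hfun : (fun x : ℝ => u (z + t • θ + (t - x) • (-θ)) (-θ))
        = fun s : ℝ => u (z + s • θ) (-θ) := by
      funext x
      congr 1
      rw [smul_neg, ← neg_smul, neg_sub, sub_smul]
      module
    rw [hfun] at H2
    have hval : -(2 * tensorPairing (2 * q) f (z + t • θ) (-θ)) = -(2 * h t) := by
      rw [tp_neg _ (even_two_mul q) f]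
    rw [hval] at H2
    exact H2
  -- continuity along the chord
  have hmaps : ∀ ψ : EuclideanSpace ℝ (Fin 2), ‖ψ‖ = 1 →
      ContinuousOn (fun t : ℝ => u (z + t • θ) ψ) (Set.Icc ta tb) := by
    intro ψ hψ
    have hcont : Continuous (fun t : ℝ => ((z + t • θ, ψ) :
        EuclideanSpace ℝ (Fin 2) × EuclideanSpace ℝ (Fin 2))) :=
      (continuous_const.add (continuous_id.smul continuous_const)).prodMk continuous_const
    apply hu_cont.comp hcont.continuousOn
    intro t ht
    refine ⟨?_, ?_⟩
    · exact mem_closedBall_zero_iff.2 (hnorm_le t ht)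
    · exact mem_sphere_zero_iff_norm.2 hψ
  have hIcc1 : Set.Icc ta (0:ℝ) ⊆ Set.Icc ta tb := Set.Icc_subset_Icc le_rfl (le_of_lt htb0)
  have hIcc2 : Set.Icc (0:ℝ) tb ⊆ Set.Icc ta tb := Set.Icc_subset_Icc (le_of_lt hta0) le_rfl
  have hIoo1 : Set.Ioo ta (0:ℝ) ⊆ Set.Ioo ta tb := Set.Ioo_subset_Ioo le_rfl (le_of_lt htb0)
  have hIoo2 : Set.Ioo (0:ℝ) tb ⊆ Set.Ioo ta tb := Set.Ioo_subset_Ioo (le_of_lt hta0) le_rfl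
  have F1 := intervalIntegral.integral_eq_sub_of_hasDerivAt_of_le (le_of_lt hta0)
    ((hmaps θ hθ).mono hIcc1) (fun x hx => hderiv1 x (hIoo1 hx))
    ((hgood.const_mul 2).intervalIntegrable)
  have F2 := intervalIntegral.integral_eq_sub_of_hasDerivAt_of_le (le_of_lt htb0)
    ((hmaps (-θ) hθn).mono hIcc2) (fun x hx => hderiv2 x (hIoo2 hx))
    (((hgood.const_mul 2).neg).intervalIntegrable)
  have hz0 : z + (0:ℝ) • θ = z := by rw [zero_smul, add_zero]
  rw [hz0] at F1 F2
  -- boundary conditions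
  have hinner : ∀ t : ℝ, ⟪z + t • θ, θ⟫ = c + t := by
    intro t
    rw [inner_add_left, real_inner_smul_left, real_inner_self_eq_norm_sq, hθ, ← hc]
    ring
  have hbc1 : u (z + ta • θ) θ = - xrayT (2 * q) f (z + ta • θ) θ :=
    hu_bc _ _ hna hθ (by rw [hinner ta, hta]; linarith)
  have hbc2 : u (z + tb • θ) (-θ) = - xrayT (2 * q) f (z + tb • θ) (-θ) :=
    hu_bc _ _ hnb hθn (by rw [inner_neg_right, hinner tb, htb]; linarith)
  -- X-ray transform values
  have hx1 : xrayT (2 * q) f (z + ta • θ) θ = ∫ t : ℝ, h t := by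
    unfold xrayT
    have he : ∀ t : ℝ, z + ta • θ + t • θ = z + (t + ta) • θ := by
      intro t; rw [add_smul]; module
    simp_rw [he]
    exact integral_add_right_eq_self h ta
  have hx2 : xrayT (2 * q) f (z + tb • θ) (-θ) = ∫ t : ℝ, h t := by
    unfold xrayT
    have he : ∀ t : ℝ, tensorPairing (2 * q) f (z + tb • θ + t • (-θ)) (-θ) = h (tb - t) := by
      intro t
      have h1 : z + tb • θ + t • (-θ) = z + (tb - t) • θ := by
        rw [smul_neg, ← neg_smul, sub_smul]; module
      rw [h1, tp_neg _ (even_two_mul q) f]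
    simp_rw [he]
    exact integral_sub_left_eq_self h volume tb
  -- splicing the integrals
  have hAdd : (∫ t in ta..(0:ℝ), h t) + (∫ t in (0:ℝ)..tb, h t) = ∫ t in ta..tb, h t :=
    intervalIntegral.integral_add_adjacent_intervals hgood.intervalIntegrable
      hgood.intervalIntegrable
  have hFull : (∫ t in ta..tb, h t) = ∫ t : ℝ, h t := by
    rw [intervalIntegral.integral_of_le (le_of_lt htab)]
    have hind : Set.indicator (Set.Ioc ta tb) h = h := by
      funext t
      by_cases hmem : t ∈ Set.Ioc ta tb
      · rw [Set.indicator_of_mem hmem]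
      · rw [Set.indicator_of_notMem hmem]
        exact (hvanish t fun hIoo => hmem ⟨hIoo.1, le_of_lt hIoo.2⟩).symm
    rw [← integral_indicator measurableSet_Ioc, hind]
  have hF1' : (∫ t in ta..(0:ℝ), 2 * h t) = 2 * ∫ t in ta..(0:ℝ), h t :=
    intervalIntegral.integral_const_mul 2 h
  have hF2' : (∫ t in (0:ℝ)..tb, -(2 * h t)) = -(2 * ∫ t in (0:ℝ)..tb, h t) := by
    rw [intervalIntegral.integral_neg, intervalIntegral.integral_const_mul]
  rw [hF1'] at F1
  rw [hF2'] at F2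
  rw [hbc1, hx1] at F1
  rw [hbc2, hx2] at F2
  linarith

/-- For an even order tensor `m = 2q`: if `u ∈ C¹(cl Ω × S¹)` solves the transport equation
`θ·∇u(z,θ) = 2⟨f(z), θ^m⟩` in `Ω × S¹` with boundary condition `u = -Xf` on the influx
boundary `Γ₋` (i.e. at `‖x‖ = 1` with `⟪x,θ⟫ < 0`), then `u` is odd in the direction:
`u(z,θ) = -u(z,-θ)`. -/
theorem stmt_11 (q : ℕ)
    (f : (Fin (2 * q) → Fin 2) → EuclideanSpace ℝ (Fin 2) → ℝ)
    (hsym : ∀ (σ : Equiv.Perm (Fin (2 * q))) (i : Fin (2 * q) → Fin 2), f (i ∘ σ) = f i)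
    (hint : ∀ i, Integrable (f i))
    (hcpt : ∀ i, HasCompactSupport (f i))
    (hsupp : ∀ i, tsupport (f i) ⊆ Metric.ball (0 : EuclideanSpace ℝ (Fin 2)) 1)
    (u : EuclideanSpace ℝ (Fin 2) → EuclideanSpace ℝ (Fin 2) → ℝ)
    (hu_cont : ContinuousOn
      (fun p : EuclideanSpace ℝ (Fin 2) × EuclideanSpace ℝ (Fin 2) => u p.1 p.2)
      (Metric.closedBall 0 1 ×ˢ Metric.sphere 0 1))
    (hu_pde : ∀ z ∈ Metric.ball (0 : EuclideanSpace ℝ (Fin 2)) 1,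
      ∀ θ : EuclideanSpace ℝ (Fin 2), ‖θ‖ = 1 →
        HasDerivAt (fun t : ℝ => u (z + t • θ) θ) (2 * tensorPairing (2 * q) f z θ) 0)
    (hu_bc : ∀ x θ : EuclideanSpace ℝ (Fin 2), ‖x‖ = 1 → ‖θ‖ = 1 → ⟪x, θ⟫ < 0 →
      u x θ = - xrayT (2 * q) f x θ) :
    ∀ z θ : EuclideanSpace ℝ (Fin 2), ‖z‖ ≤ 1 → ‖θ‖ = 1 →
      u z θ = - u z (-θ) := by
  -- continuity of slices
  have hslice : ∀ ψ : EuclideanSpace ℝ (Fin 2), ‖ψ‖ = 1 →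
      ContinuousOn (fun y : EuclideanSpace ℝ (Fin 2) => u y ψ) (Metric.closedBall 0 1) := by
    intro ψ hψ
    apply hu_cont.comp ((continuous_id.prodMk continuous_const).continuousOn)
    intro y hy
    exact ⟨hy, mem_sphere_zero_iff_norm.2 hψ⟩
  -- Step C : interior points
  have interior0 : ∀ θ' : EuclideanSpace ℝ (Fin 2), ‖θ'‖ = 1 →
      ∀ z' : EuclideanSpace ℝ (Fin 2), ‖z'‖ < 1 → u z' θ' + u z' (-θ') = 0 := by
    intro θ' hθ' z' hz'
    have hθn' : ‖-θ'‖ = 1 := by rw [norm_neg]; exact hθ'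
    set θp : EuclideanSpace ℝ (Fin 2) :=
      (WithLp.equiv 2 (Fin 2 → ℝ)).symm ![-(θ' 1), θ' 0] with hθp
    have hp0 : θp 0 = -(θ' 1) := rfl
    have hp1 : θp 1 = θ' 0 := rfl
    have hsum : θ' 0 * θ' 0 + θ' 1 * θ' 1 = 1 := by
      have h := real_inner_self_eq_norm_sq θ'
      rw [hθ'] at h
      simp only [PiLp.inner_apply, RCLike.inner_apply, conj_trivial, Fin.sum_univ_two] at h
      nlinarith [h]
    have horth : ⟪θp, θ'⟫ = 0 := by
      simp [PiLp.inner_apply, RCLike.inner_apply, Fin.sum_univ_two, hp0, hp1]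
      ring
    have hnp : ‖θp‖ = 1 := by
      have h : ⟪θp, θp⟫ = 1 := by
        simp only [PiLp.inner_apply, RCLike.inner_apply, conj_trivial, Fin.sum_univ_two, hp0, hp1]
        nlinarith [hsum]
      rw [real_inner_self_eq_norm_sq] at h
      nlinarith [norm_nonneg θp]
    set s₀ : ℝ := ⟪θp, z'⟫ with hs₀
    set c : ℝ := ⟪θ', z'⟫ with hcdef
    have hdecomp : z' = s₀ • θp + c • θ' := by
      have hcomp0 : (s₀ • θp + c • θ') 0 = s₀ * θp 0 + c * θ' 0 := rfl
      have hcomp1 : (s₀ • θp + c • θ') 1 = s₀ * θp 1 + c * θ' 1 := rfl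
      ext i
      fin_cases i
      · show z' 0 = (s₀ • θp + c • θ') 0
        rw [hcomp0, hs₀, hcdef]
        simp only [PiLp.inner_apply, RCLike.inner_apply, conj_trivial,
          Fin.sum_univ_two, hp0, hp1]
        linear_combination (-(z' 0)) * hsum
      · show z' 1 = (s₀ • θp + c • θ') 1
        rw [hcomp1, hs₀, hcdef]
        simp only [PiLp.inner_apply, RCLike.inner_apply, conj_trivial,
          Fin.sum_univ_two, hp0, hp1]
        linear_combination (-(z' 1)) * hsum
    have hnormline : ∀ s t : ℝ, ‖s • θp + t • θ'‖ ^ 2 = s ^ 2 + t ^ 2 := by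
      intro s t
      rw [norm_add_sq_real, norm_smul, norm_smul, hnp, hθ', real_inner_smul_left,
        real_inner_smul_right, horth]
      simp [Real.norm_eq_abs, sq_abs]
    have hae := fubini_lines (2 * q) f hint θp θ' horth hnp hθ'
    set A : Set ℝ :=
      {s : ℝ | Integrable (fun t : ℝ => tensorPairing (2 * q) f (s • θp + t • θ') θ')} with hA
    have hAc : volume Aᶜ = 0 := by
      rw [ae_iff] at hae
      exact hae
    set U : Set ℝ := {s : ℝ | s ^ 2 + c ^ 2 < 1} with hU
    have hUopen : IsOpen U := by
      have : U = (fun s : ℝ => s ^ 2 + c ^ 2) ⁻¹' Set.Iio 1 := rfl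
      rw [this]
      exact IsOpen.preimage ((continuous_pow 2).add continuous_const) isOpen_Iio
    have hz'sq : ‖z'‖ ^ 2 < 1 := by nlinarith [norm_nonneg z']
    have hs₀U : s₀ ∈ U := by
      have h1 : ‖z'‖ ^ 2 = s₀ ^ 2 + c ^ 2 := by rw [hdecomp]; exact hnormline s₀ c
      show s₀ ^ 2 + c ^ 2 < 1
      rw [← h1]
      exact hz'sq
    haveI hNB : (nhdsWithin s₀ (A ∩ U)).NeBot := neBot_inter hAc hUopen hs₀U
    set G : ℝ → ℝ :=
      fun s => u (s • θp + c • θ') θ' + u (s • θp + c • θ') (-θ') with hG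
    have hmapsU : ∀ s ∈ U, s • θp + c • θ' ∈ Metric.closedBall (0:EuclideanSpace ℝ (Fin 2)) 1 := by
      intro s hs
      have h1 := hnormline s c
      have h2 : s ^ 2 + c ^ 2 < 1 := hs
      rw [mem_closedBall_zero_iff]
      nlinarith [norm_nonneg (s • θp + c • θ')]
    have hGcontOn : ContinuousOn G U := by
      have hline : Continuous (fun s : ℝ => s • θp + c • θ') :=
        (continuous_id.smul continuous_const).add continuous_const
      exact ((hslice θ' hθ').comp hline.continuousOn hmapsU).add
        ((hslice (-θ') hθn').comp hline.continuousOn hmapsU)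
    have hlim : Filter.Tendsto G (nhdsWithin s₀ (A ∩ U)) (nhds (G s₀)) :=
      ((hGcontOn s₀ hs₀U).mono Set.inter_subset_right)
    have h0 : ∀ᶠ s in nhdsWithin s₀ (A ∩ U), G s = 0 := by
      filter_upwards [self_mem_nhdsWithin] with s hs
      have hsA : s ∈ A := hs.1
      have hsU : s ∈ U := hs.2
      have hnormlt : ‖s • θp + c • θ'‖ < 1 := by
        have h1 := hnormline s c
        have h2 : s ^ 2 + c ^ 2 < 1 := hsU
        nlinarith [norm_nonneg (s • θp + c • θ')]
      have hgood' : Integrable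
          (fun t : ℝ => tensorPairing (2 * q) f ((s • θp + c • θ') + t • θ') θ') := by
        have hI := hsA.comp_add_right c
        have heq : (fun t : ℝ => tensorPairing (2 * q) f ((s • θp + c • θ') + t • θ') θ')
            = fun t : ℝ => tensorPairing (2 * q) f (s • θp + (t + c) • θ') θ' := by
          funext t
          congr 1
          rw [add_smul]
          module
        rw [heq]
        exact hI
      exact chord q f hsupp u hu_cont hu_pde hu_bc (s • θp + c • θ') θ' hθ' hnormlt hgood'
    have hG0 : G s₀ = 0 := lim_zero hlim h0
    have hG0' : u (s₀ • θp + c • θ') θ' + u (s₀ • θp + c • θ') (-θ') = 0 := hG0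
    rw [← hdecomp] at hG0'
    exact hG0'
  -- Step D : closed ball by continuity
  intro z θ hz hθ
  have hθn : ‖-θ‖ = 1 := by rw [norm_neg]; exact hθ
  have main : u z θ + u z (-θ) = 0 := by
    rcases lt_or_eq_of_le hz with hball | hz1
    · exact interior0 θ hθ z hball
    · set W : EuclideanSpace ℝ (Fin 2) → ℝ := fun y => u y θ + u y (-θ) with hW
      have hWcont : ContinuousOn W (Metric.closedBall 0 1) :=
        (hslice θ hθ).add (hslice (-θ) hθn)
      have hzmem : z ∈ Metric.closedBall (0 : EuclideanSpace ℝ (Fin 2)) 1 :=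
        mem_closedBall_zero_iff.2 hz
      haveI hNB : (nhdsWithin z (Metric.ball (0 : EuclideanSpace ℝ (Fin 2)) 1)).NeBot := by
        rw [← mem_closure_iff_nhdsWithin_neBot, closure_ball (0 : EuclideanSpace ℝ (Fin 2))
          one_ne_zero]
        exact hzmem
      have hlim : Filter.Tendsto W
          (nhdsWithin z (Metric.ball (0 : EuclideanSpace ℝ (Fin 2)) 1)) (nhds (W z)) :=
        (hWcont z hzmem).mono Metric.ball_subset_closedBall
      have h0 : ∀ᶠ y in nhdsWithin z (Metric.ball (0 : EuclideanSpace ℝ (Fin 2)) 1),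
          W y = 0 := by
        filter_upwards [self_mem_nhdsWithin] with y hy
        exact interior0 θ hθ y (mem_ball_zero_iff.1 hy)
      exact lim_zero hlim h0
  linarith
end

section
/- Let g be a real-valued integrable function on the torus Γ × S¹ that is odd in the angular variable (g(e^{iβ}, e^{i(θ+π)}) = −g(e^{iβ}, e^{iθ})) and satisfies the symmetry g(e^{iβ}, e^{iθ}) = g(e^{i(2θ-β-π)}, e^{i(θ+π)}). Then its Fourier coefficients satisfy: (a) g_{n,k} = 0 for all even n and all k; (b) g_{-n,-k} = conj(g_{n,k}) for all n,k; (c) g_{n,k} = (-1)^{n+k} g_{n+2k,-k} for all n,k. -/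
open MeasureTheory Real

private lemma exp_neg_I_int_pi (m : ℤ) :
    Complex.exp (-Complex.I * ((m : ℂ) * (π : ℂ))) = (-1 : ℂ) ^ m := by
  rw [show -Complex.I * ((m : ℂ) * (π : ℂ)) = (m : ℂ) * (-(π * Complex.I)) by ring,
    Complex.exp_int_mul, Complex.exp_neg, Complex.exp_pi_mul_I]
  norm_num

private lemma norm_exp_aux (z : ℝ) : ‖Complex.exp (-Complex.I * (z : ℂ))‖ = 1 := by
  rw [Complex.norm_exp]
  have : (-Complex.I * (z : ℂ)).re = 0 := by simp
  rw [this, Real.exp_zero]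

/-- A real-valued integrable function on the torus, odd in the angular variable and
satisfying the symmetry `g(β,θ) = g(2θ-β-π, θ+π)`, has Fourier coefficients satisfying
(a) `g_{n,k} = 0` for even `n`; (b) `g_{-n,-k} = conj g_{n,k}`;
(c) `g_{n,k} = (-1)^(n+k) g_{n+2k,-k}`. -/
theorem stmt_14 (g : ℝ → ℝ → ℝ)
    (hper1 : ∀ θ, Function.Periodic (fun β => g β θ) (2 * π))
    (hper2 : ∀ β, Function.Periodic (fun θ => g β θ) (2 * π))
    (hint : IntegrableOn (fun p : ℝ × ℝ => g p.1 p.2)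
      (Set.Ioc (-π) π ×ˢ Set.Ioc (-π) π))
    (hodd : ∀ β θ : ℝ, g β (θ + π) = - g β θ)
    (hsym : ∀ β θ : ℝ, g β θ = g (2 * θ - β - π) (θ + π))
    (gc : ℤ → ℤ → ℂ)
    (hgc : ∀ n k : ℤ, gc n k = (1 / (2 * (π : ℂ)) ^ 2) *
      ∫ β in Set.Ioc (-π) π, ∫ θ in Set.Ioc (-π) π,
        (g β θ : ℂ) * Complex.exp (-Complex.I * ((n : ℂ) * θ + (k : ℂ) * β))) :
    (∀ n k : ℤ, Even n → gc n k = 0) ∧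
    (∀ n k : ℤ, gc (-n) (-k) = starRingEnd ℂ (gc n k)) ∧
    (∀ n k : ℤ, gc n k = (-1 : ℂ) ^ (n + k) * gc (n + 2 * k) (-k)) := by
  have hle : -π ≤ π := by linarith [Real.pi_pos]
  -- Part (a)
  have parta : ∀ n k : ℤ, Even n → gc n k = 0 := by
    intro n k hn
    rw [hgc]
    have inner : ∀ β : ℝ, (∫ θ in Set.Ioc (-π) π,
        (g β θ : ℂ) * Complex.exp (-Complex.I * ((n : ℂ) * θ + (k : ℂ) * β))) = 0 := by
      intro β
      set h : ℝ → ℂ := fun θ => (g β θ : ℂ) *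
        Complex.exp (-Complex.I * ((n:ℂ) * θ + (k:ℂ) * β)) with hh
      have hanti : ∀ θ : ℝ, h (θ + π) = - h θ := by
        intro θ
        have h1 : g β (θ + π) = - g β θ := hodd β θ
        simp only [hh]
        rw [h1]
        push_cast
        rw [show -Complex.I * ((n:ℂ) * ((θ:ℂ) + (π:ℂ)) + (k:ℂ) * (β:ℂ)) =
            -Complex.I * ((n:ℂ) * (θ:ℂ) + (k:ℂ) * (β:ℂ)) + -Complex.I * ((n:ℂ) * (π:ℂ)) by ring,
          Complex.exp_add, exp_neg_I_int_pi, hn.neg_one_zpow, mul_one]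
        ring
      have hper : Function.Periodic h (2*π) := by
        intro θ
        rw [show θ + 2*π = (θ + π) + π by ring, hanti, hanti, neg_neg]
      rw [← intervalIntegral.integral_of_le hle]
      have e1 : ∫ θ in (-π)..π, h θ = ∫ θ in (-π)..π, h (θ + π) := by
        rw [intervalIntegral.integral_comp_add_right h π,
          show (-π : ℝ) + π = 0 by ring, show (π : ℝ) + π = 0 + 2*π by ring,
          hper.intervalIntegral_add_eq 0 (-π), show (-π : ℝ) + 2*π = π by ring]
      have e2 : ∫ θ in (-π)..π, h (θ + π) = - ∫ θ in (-π)..π, h θ := by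
        simp only [hanti, intervalIntegral.integral_neg]
      have h2 : (2:ℂ) * ∫ θ in (-π)..π, h θ = 0 := by
        have := e1.trans e2
        linear_combination this
      exact (mul_eq_zero.mp h2).resolve_left two_ne_zero
    simp only [inner, integral_zero, mul_zero]
  -- Part (b)
  have partb : ∀ n k : ℤ, gc (-n) (-k) = starRingEnd ℂ (gc n k) := by
    intro n k
    rw [hgc n k, hgc (-n) (-k), map_mul, ← integral_conj]
    congr 1
    · simp [map_ofNat]
    · refine integral_congr_ae (Filter.Eventually.of_forall fun β => ?_)
      dsimp only
      rw [← integral_conj]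
      refine integral_congr_ae (Filter.Eventually.of_forall fun θ => ?_)
      dsimp only
      rw [map_mul, Complex.conj_ofReal, ← Complex.exp_conj]
      congr 2
      simp only [map_mul, map_add, map_neg, Complex.conj_I, Complex.conj_ofReal, map_intCast]
      push_cast
      ring
  -- Integrability of the full integrand on the product
  have hintC : ∀ n k : ℤ, Integrable (Function.uncurry fun β θ : ℝ =>
      (g β θ : ℂ) * Complex.exp (-Complex.I * ((n:ℂ) * θ + (k:ℂ) * β)))
      ((volume.restrict (Set.Ioc (-π) π)).prod (volume.restrict (Set.Ioc (-π) π))) := by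
    intro n k
    rw [Measure.prod_restrict, ← Measure.volume_eq_prod]
    have h1 : IntegrableOn (fun p : ℝ × ℝ => ((g p.1 p.2 : ℝ) : ℂ))
        (Set.Ioc (-π) π ×ˢ Set.Ioc (-π) π) := hint.ofReal
    have hc : Continuous (fun p : ℝ × ℝ =>
        Complex.exp (-Complex.I * ((n:ℂ) * p.2 + (k:ℂ) * p.1))) := by
      exact Complex.continuous_exp.comp (continuous_const.mul
        ((continuous_const.mul (Complex.continuous_ofReal.comp continuous_snd)).add
          (continuous_const.mul (Complex.continuous_ofReal.comp continuous_fst))))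
    have h2 := h1.bdd_mul
      (f := fun p : ℝ × ℝ => Complex.exp (-Complex.I * ((n:ℂ) * p.2 + (k:ℂ) * p.1)))
      hc.aestronglyMeasurable
      (c := 1) (Filter.Eventually.of_forall fun p => by
        rw [show -Complex.I * ((n:ℂ) * (p.2:ℂ) + (k:ℂ) * (p.1:ℂ))
            = -Complex.I * (((n * p.2 + k * p.1 : ℝ)):ℂ) by push_cast; ring, norm_exp_aux])
    have heq : (Function.uncurry fun β θ : ℝ =>
        (g β θ : ℂ) * Complex.exp (-Complex.I * ((n:ℂ) * θ + (k:ℂ) * β)))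
        = fun p : ℝ × ℝ =>
          Complex.exp (-Complex.I * ((n:ℂ) * p.2 + (k:ℂ) * p.1)) * (g p.1 p.2 : ℂ) := by
      funext p; simp [Function.uncurry, mul_comm]
    rw [heq]
    exact h2
  -- Fubini swap
  have hswap : ∀ n k : ℤ,
      (∫ β in Set.Ioc (-π) π, ∫ θ in Set.Ioc (-π) π,
        (g β θ : ℂ) * Complex.exp (-Complex.I * ((n:ℂ) * θ + (k:ℂ) * β)))
      = ∫ θ in Set.Ioc (-π) π, ∫ β in Set.Ioc (-π) π,
        (g β θ : ℂ) * Complex.exp (-Complex.I * ((n:ℂ) * θ + (k:ℂ) * β)) :=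
    fun n k => integral_integral_swap (hintC n k)
  -- pointwise reflection step
  have hpoint : ∀ (n k : ℤ) (θ : ℝ),
      (∫ β in Set.Ioc (-π) π,
        (g β θ : ℂ) * Complex.exp (-Complex.I * ((n : ℂ) * θ + (k : ℂ) * β)))
      = -((-1:ℂ)^k) * ∫ β in Set.Ioc (-π) π,
        (g β θ : ℂ) * Complex.exp (-Complex.I * (((n + 2*k : ℤ) : ℂ) * θ + ((-k : ℤ) : ℂ) * β)) := by
    intro n k θ
    rw [← intervalIntegral.integral_of_le hle, ← intervalIntegral.integral_of_le hle]
    set F : ℝ → ℂ := fun u => (g u θ : ℂ) *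
      Complex.exp (-Complex.I * ((n:ℂ) * θ + (k:ℂ) * ((2*θ - 3*π - u : ℝ) : ℂ))) with hF
    have hgb : ∀ β : ℝ, g β θ = - g (2*θ - 3*π - β) θ := by
      intro β
      have h1 := hsym β (θ - π)
      have h2 := hodd β (θ - π)
      rw [sub_add_cancel] at h2 h1
      rw [show (2*θ - 3*π - β : ℝ) = 2 * (θ - π) - β - π by ring]
      rw [← h1, ← h2]
    have e0 : ∀ β : ℝ, (g β θ : ℂ) * Complex.exp (-Complex.I * ((n:ℂ) * θ + (k:ℂ) * β))
        = - F (2*θ - 3*π - β) := by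
      intro β
      rw [hF]
      dsimp only
      rw [show (2*θ - 3*π - (2*θ - 3*π - β) : ℝ) = β by ring, hgb β]
      push_cast
      ring
    simp only [e0]
    rw [intervalIntegral.integral_neg, intervalIntegral.integral_comp_sub_left F (2*θ - 3*π)]
    have hFper : Function.Periodic F (2*π) := by
      intro u
      rw [hF]
      dsimp only
      rw [show g (u + 2*π) θ = g u θ from hper1 θ u]
      congr 1
      rw [show -Complex.I * ((n:ℂ) * θ + (k:ℂ) * ((2*θ - 3*π - (u + 2*π) : ℝ) : ℂ))
          = -Complex.I * ((n:ℂ) * θ + (k:ℂ) * ((2*θ - 3*π - u : ℝ) : ℂ)) + (k : ℤ) * (2*π*Complex.I)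
          by push_cast; ring, Complex.exp_add, Complex.exp_int_mul_two_pi_mul_I, mul_one]
    rw [show (2*θ - 3*π - π : ℝ) = (2*θ - 4*π) by ring,
      show (2*θ - 3*π - -π : ℝ) = (2*θ - 4*π) + 2*π by ring,
      hFper.intervalIntegral_add_eq (2*θ - 4*π) (-π),
      show (-π : ℝ) + 2*π = π by ring]
    have eF : ∀ u : ℝ, F u = (-1:ℂ)^k *
        ((g u θ : ℂ) * Complex.exp (-Complex.I * (((n + 2*k : ℤ) : ℂ) * θ + ((-k : ℤ) : ℂ) * u))) := by
      intro u
      rw [hF]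
      dsimp only
      rw [show -Complex.I * ((n:ℂ) * θ + (k:ℂ) * ((2*θ - 3*π - u : ℝ) : ℂ))
          = -Complex.I * (((n + 2*k : ℤ) : ℂ) * θ + ((-k : ℤ) : ℂ) * u) + (3*(k:ℂ)) * (π*Complex.I)
          by push_cast; ring, Complex.exp_add]
      have h3 : Complex.exp ((3*(k:ℂ)) * (π*Complex.I)) = (-1:ℂ)^k := by
        rw [show (3*(k:ℂ)) * (π*Complex.I) = ((3*k : ℤ) : ℂ) * (π*Complex.I) by push_cast; ring,
          Complex.exp_int_mul, Complex.exp_pi_mul_I,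
          show (3*k : ℤ) = 2*k + k by ring,
          zpow_add₀ (by norm_num : (-1:ℂ) ≠ 0), zpow_mul]
        norm_num
      rw [h3]
      ring
    simp only [eF]
    rw [intervalIntegral.integral_const_mul]
    ring
  -- key identity
  have key : ∀ n k : ℤ, gc n k = -((-1:ℂ)^k) * gc (n + 2*k) (-k) := by
    intro n k
    rw [hgc n k, hgc (n + 2*k) (-k), hswap n k, hswap (n + 2*k) (-k)]
    simp only [hpoint n k]
    rw [integral_const_mul]
    ring
  refine ⟨parta, partb, fun n k => ?_⟩
  rcases Int.even_or_odd n with he | ho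
  · rw [parta n k he, parta (n + 2*k) (-k) (he.add (even_two_mul k)), mul_zero]
  · rw [key n k, zpow_add₀ (by norm_num : (-1:ℂ) ≠ 0), ho.neg_one_zpow]
    ring
end

section
/- Let g be a real-valued integrable function on the torus Γ × S¹ that is even in the angular variable (g(e^{iβ}, e^{i(θ+π)}) = g(e^{iβ}, e^{iθ})) and skew-symmetric: g(e^{iβ}, e^{iθ}) = −g(e^{i(2θ-β-π)}, e^{i(θ+π)}). Then its Fourier coefficients satisfy: (a) g_{n,k} = 0 for all odd n and all k; (b) g_{-n,-k} = conj(g_{n,k}); (c) g_{n,k} = −(−1)^{n+k} g_{n+2k,−k} for all n, k. -/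
open MeasureTheory Real

lemma aux_exp_pi (j : ℤ) : Complex.exp ((j:ℂ) * π * Complex.I) = (-1:ℂ)^j := by
  rw [show ((j:ℂ) * π * Complex.I) = j * (π * Complex.I) by ring, Complex.exp_int_mul,
    Complex.exp_pi_mul_I]

lemma aux_neg_one_sq (j : ℤ) : ((-1:ℂ)^j) * (-1:ℂ)^j = 1 := by
  rw [← zpow_add₀ (by norm_num : (-1:ℂ) ≠ 0)]
  exact Even.neg_one_zpow ⟨j, rfl⟩

lemma aux_zpow_neg (j : ℤ) : (-1:ℂ)^(-j) = (-1:ℂ)^j := by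
  rw [zpow_neg]
  rcases Int.even_or_odd j with h | h
  · rw [h.neg_one_zpow]; norm_num
  · rw [h.neg_one_zpow]; norm_num

lemma aux_cancel (j : ℤ) (x y : ℂ) : x * y = (-1:ℂ)^j * ((x * (-1:ℂ)^j) * y) := by
  rw [show (-1:ℂ)^j * ((x * (-1:ℂ)^j) * y) = (((-1:ℂ)^j) * (-1:ℂ)^j) * (x * y) by ring,
    aux_neg_one_sq, one_mul]

/-- A real-valued integrable function on the torus, even in the angular variable and
skew-symmetric: `g(β,θ) = -g(2θ-β-π, θ+π)`, has Fourier coefficients satisfying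
(a) `g_{n,k} = 0` for odd `n`; (b) `g_{-n,-k} = conj g_{n,k}`;
(c) `g_{n,k} = -(-1)^(n+k) g_{n+2k,-k}`. -/
theorem stmt_15 (g : ℝ → ℝ → ℝ)
    (hper1 : ∀ θ, Function.Periodic (fun β => g β θ) (2 * π))
    (hper2 : ∀ β, Function.Periodic (fun θ => g β θ) (2 * π))
    (hint : IntegrableOn (fun p : ℝ × ℝ => g p.1 p.2)
      (Set.Ioc (-π) π ×ˢ Set.Ioc (-π) π))
    (heven : ∀ β θ : ℝ, g β (θ + π) = g β θ)
    (hskew : ∀ β θ : ℝ, g β θ = - g (2 * θ - β - π) (θ + π))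
    (gc : ℤ → ℤ → ℂ)
    (hgc : ∀ n k : ℤ, gc n k = (1 / (2 * (π : ℂ)) ^ 2) *
      ∫ β in Set.Ioc (-π) π, ∫ θ in Set.Ioc (-π) π,
        (g β θ : ℂ) * Complex.exp (-Complex.I * ((n : ℂ) * θ + (k : ℂ) * β))) :
    (∀ n k : ℤ, Odd n → gc n k = 0) ∧
    (∀ n k : ℤ, gc (-n) (-k) = starRingEnd ℂ (gc n k)) ∧
    (∀ n k : ℤ, gc n k = -((-1 : ℂ) ^ (n + k)) * gc (n + 2 * k) (-k)) := by
  have hπ : -π ≤ π := by linarith [Real.pi_pos]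
  have hg1 : ∀ u t : ℝ, g (u + 2*π) t = g u t := fun u t => hper1 t u
  have hg2 : ∀ u t : ℝ, g u (t + 2*π) = g u t := fun u t => hper2 u t
  -- integrability of the integrand w.r.t. the product of restricted measures
  have keyexp : ∀ a b : ℤ, Integrable (fun p : ℝ × ℝ => (g p.1 p.2 : ℂ) *
        Complex.exp (-Complex.I * ((a:ℂ) * p.2 + (b:ℂ) * p.1)))
      ((volume.restrict (Set.Ioc (-π) π)).prod (volume.restrict (Set.Ioc (-π) π))) := by
    intro a b
    have hP : (volume.restrict (Set.Ioc (-π) π)).prod (volume.restrict (Set.Ioc (-π) π))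
        = volume.restrict ((Set.Ioc (-π) π) ×ˢ (Set.Ioc (-π) π)) := by
      rw [Measure.prod_restrict, ← Measure.volume_eq_prod]
    rw [hP]
    have hgC : Integrable (fun p : ℝ × ℝ => ((g p.1 p.2 : ℝ) : ℂ))
        (volume.restrict ((Set.Ioc (-π) π) ×ˢ (Set.Ioc (-π) π))) := hint.ofReal
    have hc : Continuous fun p : ℝ × ℝ =>
        Complex.exp (-Complex.I * ((a:ℂ) * p.2 + (b:ℂ) * p.1)) := by fun_prop
    have hb := hgC.bdd_mul (c := 1) hc.aestronglyMeasurable (Filter.Eventually.of_forall fun p => ?_)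
    · simpa [mul_comm] using hb
    · rw [Complex.norm_exp]
      simp [Complex.mul_re, Complex.add_re]
  refine ⟨?_, ?_, ?_⟩
  · -- (a)
    intro n k hn
    rw [hgc n k]
    have hinner : ∀ β : ℝ, (∫ θ in Set.Ioc (-π) π,
        (g β θ : ℂ) * Complex.exp (-Complex.I * ((n : ℂ) * θ + (k : ℂ) * β))) = 0 := by
      intro β
      set h : ℝ → ℂ := fun θ => (g β θ : ℂ) *
        Complex.exp (-Complex.I * ((n : ℂ) * θ + (k : ℂ) * β)) with hh
      have hper : Function.Periodic h (2*π) := by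
        intro θ
        simp only [hh]
        rw [hg2 β θ]
        congr 1
        rw [show -Complex.I * ((n:ℂ) * ((θ + 2*π : ℝ) : ℂ) + (k:ℂ) * (β:ℂ))
            = -Complex.I * ((n:ℂ) * (θ:ℂ) + (k:ℂ) * β) + ((-n : ℤ):ℂ) * (2*π*Complex.I) by
          push_cast; ring, Complex.exp_add, Complex.exp_int_mul_two_pi_mul_I, mul_one]
      have h4 : ∀ θ : ℝ, h (θ + π) = -h θ := by
        intro θ
        simp only [hh]
        rw [heven β θ]
        rw [show -Complex.I * ((n:ℂ) * ((θ + π : ℝ) : ℂ) + (k:ℂ) * (β:ℂ))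
            = -Complex.I * ((n:ℂ) * (θ:ℂ) + (k:ℂ) * β) + ((-n : ℤ):ℂ) * π * Complex.I by
          push_cast; ring, Complex.exp_add, aux_exp_pi (-n), (hn.neg).neg_one_zpow]
        ring
      have h2 : ∫ θ in (-π)..π, h (θ + π) = ∫ θ in (0:ℝ)..(2*π), h θ := by
        rw [intervalIntegral.integral_comp_add_right h π]
        norm_num
        ring_nf
      have h3 : ∫ θ in (-π)..π, h θ = ∫ θ in (0:ℝ)..(2*π), h θ := by
        have := hper.intervalIntegral_add_eq (-π) 0
        rwa [show -π + 2*π = π by ring, zero_add] at this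
      have hI : ∫ θ in (-π)..π, h θ = -∫ θ in (-π)..π, h θ := by
        conv_lhs => rw [h3, ← h2]
        simp only [h4, intervalIntegral.integral_neg]
      have h2ne : (2:ℂ) ≠ 0 := by norm_num
      have hz : (2:ℂ) * ∫ θ in (-π)..π, h θ = 0 := by linear_combination hI
      rw [← intervalIntegral.integral_of_le hπ]
      exact (mul_eq_zero.mp hz).resolve_left h2ne
    rw [show (∫ β in Set.Ioc (-π) π, ∫ θ in Set.Ioc (-π) π,
        (g β θ : ℂ) * Complex.exp (-Complex.I * ((n : ℂ) * θ + (k : ℂ) * β)))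
        = ∫ _β in Set.Ioc (-π) π, (0:ℂ) from
      integral_congr_ae (Filter.Eventually.of_forall fun β => hinner β)]
    simp
  · -- (b)
    intro n k
    rw [hgc n k, hgc (-n) (-k), map_mul]
    congr 1
    · simp [map_div₀, map_pow, map_mul, Complex.conj_ofReal, map_ofNat]
    · rw [← integral_conj]
      refine integral_congr_ae (Filter.Eventually.of_forall fun β => ?_)
      simp only []
      rw [← integral_conj]
      refine integral_congr_ae (Filter.Eventually.of_forall fun θ => ?_)
      simp only []
      simp only [map_mul, Complex.conj_ofReal, ← Complex.exp_conj, map_add, map_neg,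
        Complex.conj_I, map_intCast]
      congr 2
      push_cast
      ring
  · -- (c)
    intro n k
    rw [hgc n k, hgc (n + 2*k) (-k)]
    -- inner lemma: the β-integral for fixed θ
    have hinner : ∀ θ : ℝ,
        (∫ β in Set.Ioc (-π) π, (g β θ : ℂ) *
          Complex.exp (-Complex.I * ((n : ℂ) * θ + (k : ℂ) * β)))
        = -((-1:ℂ)^k) * (Complex.exp (-Complex.I * ((n + 2*k : ℤ) : ℂ) * θ) *
            ∫ u in Set.Ioc (-π) π, (g u (θ + π) : ℂ) * Complex.exp (Complex.I * (k:ℂ) * u)) := by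
      intro θ
      set φ : ℝ → ℂ := fun u => (g u (θ + π) : ℂ) * Complex.exp (Complex.I * (k:ℂ) * u) with hφ
      have hφper : Function.Periodic φ (2*π) := by
        intro u
        simp only [hφ]
        rw [hg1 u (θ + π)]
        congr 1
        rw [show Complex.I * (k:ℂ) * ((u + 2*π : ℝ) : ℂ)
            = Complex.I * (k:ℂ) * (u:ℂ) + (k:ℂ) * (2*π*Complex.I) by push_cast; ring,
          Complex.exp_add, Complex.exp_int_mul_two_pi_mul_I, mul_one]
      set C : ℂ := (-1:ℂ)^k * Complex.exp (-Complex.I * ((n + 2*k : ℤ) : ℂ) * θ) with hC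
      have hpt : ∀ β : ℝ, (g β θ : ℂ) * Complex.exp (-Complex.I * ((n : ℂ) * θ + (k : ℂ) * β))
          = -(C * φ (2*θ - π - β)) := by
        intro β
        rw [hskew β θ]
        simp only [hφ, hC]
        rw [show (2*θ - β - π : ℝ) = 2*θ - π - β by ring]
        push_cast
        rw [show -Complex.I * ((n:ℂ) * (θ:ℂ) + (k:ℂ) * (β:ℂ))
            = (-Complex.I * ((n:ℂ) + 2*(k:ℂ)) * θ + (k:ℂ) * π * Complex.I)
              + Complex.I * (k:ℂ) * (2*(θ:ℂ) - π - β) by ring,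
          Complex.exp_add, Complex.exp_add, aux_exp_pi k]
        ring
      calc (∫ β in Set.Ioc (-π) π, (g β θ : ℂ) *
            Complex.exp (-Complex.I * ((n : ℂ) * θ + (k : ℂ) * β)))
          = ∫ β in Set.Ioc (-π) π, -(C * φ (2*θ - π - β)) :=
            integral_congr_ae (Filter.Eventually.of_forall fun β => hpt β)
        _ = -(C * ∫ β in (-π)..π, φ (2*θ - π - β)) := by
            rw [← intervalIntegral.integral_of_le hπ, intervalIntegral.integral_neg,
              intervalIntegral.integral_const_mul]
        _ = -(C * ∫ u in (2*θ - π - π)..(2*θ - π - -π), φ u) := by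
            rw [intervalIntegral.integral_comp_sub_left φ (2*θ - π)]
        _ = -(C * ∫ u in (-π)..π, φ u) := by
            rw [show (2*θ - π - π : ℝ) = 2*θ - 2*π by ring,
              show (2*θ - π - -π : ℝ) = 2*θ - 2*π + 2*π by ring]
            have := hφper.intervalIntegral_add_eq (2*θ - 2*π) (-π)
            rw [this, show -π + 2*π = π by ring]
        _ = -((-1:ℂ)^k) * (Complex.exp (-Complex.I * ((n + 2*k : ℤ) : ℂ) * θ) *
            ∫ u in Set.Ioc (-π) π, (g u (θ + π) : ℂ) * Complex.exp (Complex.I * (k:ℂ) * u)) := by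
            rw [intervalIntegral.integral_of_le hπ, hC, hφ]
            ring
    -- main chain for the double integral
    have hA : (∫ β in Set.Ioc (-π) π, ∫ θ in Set.Ioc (-π) π,
          (g β θ : ℂ) * Complex.exp (-Complex.I * ((n : ℂ) * θ + (k : ℂ) * β)))
        = -((-1:ℂ)^(n+k)) * ∫ β in Set.Ioc (-π) π, ∫ θ in Set.Ioc (-π) π,
          (g β θ : ℂ) * Complex.exp (-Complex.I * (((n + 2*k : ℤ) : ℂ) * θ + ((-k : ℤ) : ℂ) * β)) := by
      set G : ℝ → ℂ := fun t => ∫ u in Set.Ioc (-π) π, (g u t : ℂ) *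
        Complex.exp (Complex.I * (k:ℂ) * u) with hG
      set Ψ : ℝ → ℂ := fun t => Complex.exp (-Complex.I * ((n + 2*k : ℤ) : ℂ) * t) * G t with hΨ
      have hGper : ∀ t : ℝ, G (t + 2*π) = G t := by
        intro t
        simp only [hG]
        refine integral_congr_ae (Filter.Eventually.of_forall fun u => ?_)
        simp only []
        rw [hg2 u t]
      have hΨper : Function.Periodic Ψ (2*π) := by
        intro t
        simp only [hΨ]
        rw [hGper t]
        congr 1
        rw [show -Complex.I * ((n + 2*k : ℤ) : ℂ) * ((t + 2*π : ℝ) : ℂ)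
            = -Complex.I * ((n + 2*k : ℤ) : ℂ) * (t:ℂ)
              + ((-(n+2*k) : ℤ):ℂ) * (2*π*Complex.I) by push_cast; ring,
          Complex.exp_add, Complex.exp_int_mul_two_pi_mul_I, mul_one]
      have hsplit : ∀ θ : ℝ, Complex.exp (-Complex.I * ((n + 2*k : ℤ) : ℂ) * ((θ + π : ℝ) : ℂ))
          = Complex.exp (-Complex.I * ((n + 2*k : ℤ) : ℂ) * (θ:ℂ)) * (-1:ℂ)^(n+2*k) := by
        intro θ
        rw [show -Complex.I * ((n + 2*k : ℤ) : ℂ) * ((θ + π : ℝ) : ℂ)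
            = -Complex.I * ((n + 2*k : ℤ) : ℂ) * (θ:ℂ)
              + ((-(n+2*k) : ℤ):ℂ) * π * Complex.I by push_cast; ring,
          Complex.exp_add, aux_exp_pi (-(n+2*k)), aux_zpow_neg]
      calc (∫ β in Set.Ioc (-π) π, ∫ θ in Set.Ioc (-π) π,
            (g β θ : ℂ) * Complex.exp (-Complex.I * ((n : ℂ) * θ + (k : ℂ) * β)))
          = ∫ θ in Set.Ioc (-π) π, ∫ β in Set.Ioc (-π) π,
            (g β θ : ℂ) * Complex.exp (-Complex.I * ((n : ℂ) * θ + (k : ℂ) * β)) :=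
            integral_integral_swap (keyexp n k)
        _ = ∫ θ in Set.Ioc (-π) π, -((-1:ℂ)^k) *
              (Complex.exp (-Complex.I * ((n + 2*k : ℤ) : ℂ) * θ) * G (θ + π)) :=
            integral_congr_ae (Filter.Eventually.of_forall fun θ => hinner θ)
        _ = -((-1:ℂ)^k) * ∫ θ in Set.Ioc (-π) π,
              Complex.exp (-Complex.I * ((n + 2*k : ℤ) : ℂ) * θ) * G (θ + π) :=
            integral_const_mul _ _
        _ = -((-1:ℂ)^k) * ∫ θ in Set.Ioc (-π) π, (-1:ℂ)^(n+2*k) * Ψ (θ + π) := by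
            congr 1
            refine integral_congr_ae (Filter.Eventually.of_forall fun θ => ?_)
            simp only [hΨ]
            rw [hsplit θ]
            exact aux_cancel (n+2*k) _ _
        _ = -((-1:ℂ)^k) * ((-1:ℂ)^(n+2*k) * ∫ θ in Set.Ioc (-π) π, Ψ (θ + π)) := by
            rw [integral_const_mul]
        _ = -((-1:ℂ)^k) * ((-1:ℂ)^(n+2*k) * ∫ θ in Set.Ioc (-π) π, Ψ θ) := by
            congr 2
            rw [← intervalIntegral.integral_of_le hπ, ← intervalIntegral.integral_of_le hπ,
              intervalIntegral.integral_comp_add_right Ψ π]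
            have := hΨper.intervalIntegral_add_eq (-π) 0
            rw [show -π + 2*π = π by ring, zero_add] at this
            rw [this, show -π + π = 0 by ring, show π + π = 2*π by ring]
        _ = -((-1:ℂ)^(n+k)) * ∫ θ in Set.Ioc (-π) π, ∫ u in Set.Ioc (-π) π,
              (g u θ : ℂ) * Complex.exp (-Complex.I *
                (((n + 2*k : ℤ) : ℂ) * θ + ((-k : ℤ) : ℂ) * u)) := by
            have hsgn : -((-1:ℂ)^k) * (-1:ℂ)^(n+2*k) = -((-1:ℂ)^(n+k)) := by
              have h2 : ((-1:ℂ))^(2*k) = 1 := by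
                rw [show (2*k:ℤ) = k + k by ring, zpow_add₀ (by norm_num : (-1:ℂ) ≠ 0)]
                exact aux_neg_one_sq k
              rw [zpow_add₀ (by norm_num : (-1:ℂ) ≠ 0) n (2*k), h2,
                zpow_add₀ (by norm_num : (-1:ℂ) ≠ 0)]
              ring
            rw [← mul_assoc, hsgn]
            congr 1
            refine integral_congr_ae (Filter.Eventually.of_forall fun θ => ?_)
            simp only [hΨ, hG]
            rw [← integral_const_mul]
            refine integral_congr_ae (Filter.Eventually.of_forall fun u => ?_)
            simp only []
            rw [show -Complex.I * (((n + 2*k : ℤ) : ℂ) * (θ:ℂ) + ((-k : ℤ) : ℂ) * (u:ℂ))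
                = -Complex.I * ((n + 2*k : ℤ) : ℂ) * θ + Complex.I * (k:ℂ) * u by
              push_cast; ring, Complex.exp_add]
            ring
        _ = -((-1:ℂ)^(n+k)) * ∫ β in Set.Ioc (-π) π, ∫ θ in Set.Ioc (-π) π,
              (g β θ : ℂ) * Complex.exp (-Complex.I *
                (((n + 2*k : ℤ) : ℂ) * θ + ((-k : ℤ) : ℂ) * β)) := by
            congr 1
            have hswap2 : Integrable ((fun p : ℝ × ℝ => (g p.1 p.2 : ℂ) *
                Complex.exp (-Complex.I * (((n + 2*k : ℤ):ℂ) * p.2 + ((-k : ℤ):ℂ) * p.1)))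
                  ∘ Prod.swap)
                ((volume.restrict (Set.Ioc (-π) π)).prod (volume.restrict (Set.Ioc (-π) π))) :=
              (keyexp (n + 2*k) (-k)).swap
            exact integral_integral_swap hswap2
    rw [hA]
    ring
end

section
/- Let g be integrable on the torus and define, for Fourier coefficients {g_{n,k}}, the interaction of the four range conditions for an even-order tensor m = 2q: oddness (g_{n,k} = 0 for even n), conjugacy (g_{-n,-k} = conj g_{n,k}), symmetry (g_{n,k} = (−1)^{n+k} g_{n+2k,−k}), and moments (g_{n,k} = (−1)^k g_{n+2k,−k} for odd n ≤ −(m+1) and k ≤ 0). Then for all odd n ≤ −1: g_{n,k} = 0 if (n,k) ∈ W; g_{n,k} = (−1)^{1+k} conj(g_{−n−2k,k}) if (n,k) ∈ G; and g_{n,k} = (−1)^{1+k} g_{n+2k,−k} if (n,k) ∈ R; where W = {odd n ≤ −m−1, 0 ≤ k ≤ −(n+m+1)/2} ∪ {odd n ≤ −m−1, k ≤ 0}, G = {odd n ≤ −1, (−n+1)/2 ≤ k ≤ −n} ∪ {odd n ≤ −1, k > −n}, and R = {odd n ≤ −1, −(n+m−1)/2 ≤ k ≤ −(n+1)/2} ∪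 {odd −m+1 ≤ n ≤ −1, k ≤ 0} (R is empty if m = 0). -/
/-!
The symmetry relation alone gives the red formula at every odd `n`, and combined with
conjugacy it gives the green formula. In the moment range `n ≤ -(m+1)`, `k ≤ 0`, the symmetry
and moment relations express `g n k` through `g (n+2k) (-k)` with opposite signs (as `n` is odd),
so `g n k = 0` there; the symmetry relation carries this vanishing over to the rest of `W`.
-/

lemma neg_one_zpow_odd_add {R : Type*} [DivisionRing R] {n : ℤ} (hn : Odd n) (k : ℤ) :
    (-1 : R) ^ (n + k) = (-1 : R) ^ (1 + k) := by
  rw [zpow_add₀ (by norm_num), zpow_add₀ (by norm_num), hn.neg_one_zpow, zpow_one]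

section RangeConditions

variable {g : ℤ → ℤ → ℂ}

lemma reflect_of_symm (hsymm : ∀ n k : ℤ, g n k = (-1 : ℂ) ^ (n + k) * g (n + 2 * k) (-k))
    {n : ℤ} (hn : Odd n) (k : ℤ) :
    g n k = (-1 : ℂ) ^ (1 + k) * g (n + 2 * k) (-k) := by
  rw [hsymm n k, neg_one_zpow_odd_add hn]

lemma conj_reflect_of_symm (hconj : ∀ n k : ℤ, g (-n) (-k) = starRingEnd ℂ (g n k))
    (hsymm : ∀ n k : ℤ, g n k = (-1 : ℂ) ^ (n + k) * g (n + 2 * k) (-k))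
    {n : ℤ} (hn : Odd n) (k : ℤ) :
    g n k = (-1 : ℂ) ^ (1 + k) * starRingEnd ℂ (g (-n - 2 * k) k) := by
  rw [reflect_of_symm hsymm hn k, ← hconj]
  congr 2; ring

lemma eq_zero_of_symm_of_mom {m : ℤ}
    (hsymm : ∀ n k : ℤ, g n k = (-1 : ℂ) ^ (n + k) * g (n + 2 * k) (-k))
    (hmom : ∀ n k : ℤ, Odd n → n ≤ -(m + 1) → k ≤ 0 →
      g n k = (-1 : ℂ) ^ k * g (n + 2 * k) (-k))
    {n k : ℤ} (hn : Odd n) (hnm : n ≤ -(m + 1)) (hk : k ≤ 0) : g n k = 0 := by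
  have hreflect := reflect_of_symm hsymm hn k
  rw [zpow_add₀ (by norm_num), zpow_one] at hreflect
  linear_combination (hreflect + hmom n k hn hnm hk) / 2

lemma eq_zero_of_symm_of_mom_of_nonneg {m : ℤ}
    (hsymm : ∀ n k : ℤ, g n k = (-1 : ℂ) ^ (n + k) * g (n + 2 * k) (-k))
    (hmom : ∀ n k : ℤ, Odd n → n ≤ -(m + 1) → k ≤ 0 →
      g n k = (-1 : ℂ) ^ k * g (n + 2 * k) (-k))
    {n k : ℤ} (hn : Odd n) (hk : 0 ≤ k) (hnk : 2 * k ≤ -(n + m + 1)) : g n k = 0 := by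
  have hn' : Odd (n + 2 * k) := hn.add_even (even_two_mul k)
  rw [reflect_of_symm hsymm hn k,
    eq_zero_of_symm_of_mom hsymm hmom hn' (by linarith) (by linarith), mul_zero]

end RangeConditions

theorem stmt_16_general (m : ℤ) (g : ℤ → ℤ → ℂ)
    (hconj : ∀ n k : ℤ, g (-n) (-k) = starRingEnd ℂ (g n k))
    (hsymm : ∀ n k : ℤ, g n k = (-1 : ℂ) ^ (n + k) * g (n + 2 * k) (-k))
    (hmom : ∀ n k : ℤ, Odd n → n ≤ -(m + 1) → k ≤ 0 →
      g n k = (-1 : ℂ) ^ k * g (n + 2 * k) (-k)) :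
    ∀ n k : ℤ, Odd n → n ≤ -1 →
      -- white region W = W⁺ ∪ W⁻
      (((n ≤ -m - 1 ∧ 0 ≤ k ∧ 2 * k ≤ -(n + m + 1)) ∨ (n ≤ -m - 1 ∧ k ≤ 0)) →
        g n k = 0) ∧
      -- green region G = G_L ∪ G_R
      ((((-n + 1 ≤ 2 * k ∧ k ≤ -n)) ∨ (-n < k)) →
        g n k = (-1 : ℂ) ^ (1 + k) * starRingEnd ℂ (g (-n - 2 * k) k)) ∧
      -- red region R = R⁺ ∪ R⁻
      (((-(n + m - 1) ≤ 2 * k ∧ 2 * k ≤ -(n + 1)) ∨ (-m + 1 ≤ n ∧ k ≤ 0)) →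
        g n k = (-1 : ℂ) ^ (1 + k) * g (n + 2 * k) (-k)) := by
  intro n k hn _
  refine ⟨?_, fun _ => conj_reflect_of_symm hconj hsymm hn k,
    fun _ => reflect_of_symm hsymm hn k⟩
  rintro (⟨-, hk, hnk⟩ | ⟨hnm, hk⟩)
  · exact eq_zero_of_symm_of_mom_of_nonneg hsymm hmom hn hk hnk
  · exact eq_zero_of_symm_of_mom hsymm hmom hn (by linarith) hk

/-- Algebraic interaction of the four range conditions for an even order tensor `m = 2q`:
oddness, conjugacy, symmetry, and moment conditions imply that for all odd `n ≤ -1` the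
coefficients vanish on the white region `W`, satisfy the conjugate-reflection formula
on the green region `G`, and the reflection formula on the red region `R`. -/
theorem stmt_16 (q : ℕ) (m : ℤ) (hm : m = 2 * q) (g : ℤ → ℤ → ℂ)
    (hodd : ∀ n k : ℤ, Even n → g n k = 0)
    (hconj : ∀ n k : ℤ, g (-n) (-k) = starRingEnd ℂ (g n k))
    (hsymm : ∀ n k : ℤ, g n k = (-1 : ℂ) ^ (n + k) * g (n + 2 * k) (-k))
    (hmom : ∀ n k : ℤ, Odd n → n ≤ -(m + 1) → k ≤ 0 →
      g n k = (-1 : ℂ) ^ k * g (n + 2 * k) (-k)) :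
    ∀ n k : ℤ, Odd n → n ≤ -1 →
      -- white region W = W⁺ ∪ W⁻
      (((n ≤ -m - 1 ∧ 0 ≤ k ∧ 2 * k ≤ -(n + m + 1)) ∨ (n ≤ -m - 1 ∧ k ≤ 0)) →
        g n k = 0) ∧
      -- green region G = G_L ∪ G_R
      ((((-n + 1 ≤ 2 * k ∧ k ≤ -n)) ∨ (-n < k)) →
        g n k = (-1 : ℂ) ^ (1 + k) * starRingEnd ℂ (g (-n - 2 * k) k)) ∧
      -- red region R = R⁺ ∪ R⁻
      (((-(n + m - 1) ≤ 2 * k ∧ 2 * k ≤ -(n + 1)) ∨ (-m + 1 ≤ n ∧ k ≤ 0)) →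
        g n k = (-1 : ℂ) ^ (1 + k) * g (n + 2 * k) (-k)) :=
  stmt_16_general m g hconj hsymm hmom
end
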